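/- arXiv:2304.07798 — 4 statements merged into one kernel-verified Lean document; each statement's English description precedes it below -/
import Mathlib

section
/- Assume G is an elementary abelian 2-group with n = |G| > 4 and {g,h,i} = {1,2,3}. Then the matrix E_g*A_hE_i*A_gE_4* does not lie in T₀, and the matrix E_4*A_gE_i*A_hE_g* does not lie in T₀, where T₀ is the F-linear span of {E_a*A_bE_c* : a,b,c ∈ {0,1,2,3,4}}. -/
open Matrix

abbrev XG (G : Type) [Group G] : Type := {v : Fin 3 → G // v 0 * v 1 = v 2}

def cIdx : Fin 5 → Fin 3
  | 0 => 0
  | 1 => 0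
  | 2 => 1
  | 3 => 2
  | 4 => 0

def rel {G : Type} [Group G] (i : Fin 5) (y z : XG G) : Prop :=
  if i = 0 then y = z
  else if i = 4 then ∀ d : Fin 3, y.1 d ≠ z.1 d
  else y ≠ z ∧ y.1 (cIdx i) = z.1 (cIdx i)

instance {G : Type} [Group G] [DecidableEq G] (i : Fin 5) (y z : XG G) :
    Decidable (rel i y z) := by
  unfold rel
  infer_instance

def Adj (F : Type) [Field F] {G : Type} [Group G] [DecidableEq G] (i : Fin 5) :
    Matrix (XG G) (XG G) F :=
  Matrix.of fun y z => if rel i y z then 1 else 0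

def DualE (F : Type) [Field F] {G : Type} [Group G] [DecidableEq G] (x : XG G) (i : Fin 5) :
    Matrix (XG G) (XG G) F :=
  Matrix.of fun y z => if y = z ∧ rel i x y then 1 else 0

def AllOne (F : Type) [Field F] (G : Type) [Group G] : Matrix (XG G) (XG G) F :=
  Matrix.of fun _ _ => 1

def genSet (F : Type) [Field F] (G : Type) [Group G] [Fintype G] [DecidableEq G]
    (x : XG G) : Set (Matrix (XG G) (XG G) F) :=
  {M | ∃ a b c : Fin 5, M = DualE F x a * Adj F b * DualE F x c}

def TerwilligerAlg (F : Type) [Field F] (G : Type) [Group G] [Fintype G] [DecidableEq G]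
    (x : XG G) : Subalgebra F (Matrix (XG G) (XG G) F) :=
  Algebra.adjoin F (genSet F G x)

/-! ### Auxiliary lemmas -/

lemma fin5_perm : ∀ u v w : Fin 5, ({u,v,w} : Finset (Fin 5)) = {1,2,3} →
    ((u=1∧v=2∧w=3)∨(u=1∧v=3∧w=2)∨(u=2∧v=1∧w=3)∨(u=2∧v=3∧w=1)∨(u=3∧v=1∧w=2)∨(u=3∧v=2∧w=1)) := by
  decide

lemma cIdx_inj : ∀ u v : Fin 5, (u=1∨u=2∨u=3) → (v=1∨v=2∨v=3) → u ≠ v → cIdx u ≠ cIdx v := by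
  decide

lemma fin3_cover : ∀ p q r d : Fin 3, p≠q→p≠r→q≠r→ (d=p∨d=q∨d=r) := by decide

lemma fin3_perm : ∀ p q r : Fin 3, p≠q→p≠r→q≠r→
    ((p=0∧q=1∧r=2)∨(p=0∧q=2∧r=1)∨(p=1∧q=0∧r=2)∨(p=1∧q=2∧r=0)∨(p=2∧q=0∧r=1)∨(p=2∧q=1∧r=0)) := by
  decide

lemma rel0_iff {G : Type} [Group G] (u v : XG G) : rel 0 u v ↔ u = v := by
  unfold rel; simp

lemma rel4_iff {G : Type} [Group G] (u v : XG G) : rel 4 u v ↔ ∀ d : Fin 3, u.1 d ≠ v.1 d := by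
  unfold rel
  rw [if_neg (by decide : (4:Fin 5) ≠ 0), if_pos rfl]

lemma relc_iff {G : Type} [Group G] (j : Fin 5) (h0 : j ≠ 0) (h4 : j ≠ 4) (u v : XG G) :
    rel j u v ↔ (u ≠ v ∧ u.1 (cIdx j) = v.1 (cIdx j)) := by
  unfold rel; rw [if_neg h0, if_neg h4]

lemma rel_symm {G : Type} [Group G] (j : Fin 5) (u v : XG G) : rel j u v ↔ rel j v u := by
  unfold rel
  split_ifs with h0 h4
  · exact eq_comm
  · exact ⟨fun H d => (H d).symm, fun H d => (H d).symm⟩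
  · exact and_congr ne_comm eq_comm

lemma dualE_diag (F : Type) [Field F] {G : Type} [Group G] [DecidableEq G] (x : XG G)
    (j : Fin 5) :
    DualE F x j = Matrix.diagonal (fun u => if rel j x u then (1:F) else 0) := by
  ext u v
  by_cases huv : u = v
  · subst huv; simp [DualE, Matrix.diagonal_apply_eq]
  · simp [DualE, Matrix.diagonal_apply_ne _ huv, huv]

lemma gen_entry (F : Type) [Field F] {G : Type} [Group G] [Fintype G] [DecidableEq G]
    (x : XG G) (a b c : Fin 5) (u v : XG G) :
    ((DualE F x a * Adj F b * DualE F x c : Matrix (XG G) (XG G) F)) u v =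
      (if rel a x u then (1:F) else 0) * (if rel b u v then 1 else 0) *
        (if rel c x v then 1 else 0) := by
  rw [dualE_diag F x a, dualE_diag F x c, Matrix.mul_diagonal, Matrix.diagonal_mul]
  rfl

lemma big_entry (F : Type) [Field F] {G : Type} [Group G] [Fintype G] [DecidableEq G]
    (x : XG G) (a b c d e : Fin 5) (u v : XG G) :
    ((DualE F x a * Adj F b * DualE F x c * Adj F d * DualE F x e :
        Matrix (XG G) (XG G) F)) u v =
      (if rel a x u then (1:F) else 0) *
        (∑ w : XG G, (if rel b u w then (1:F) else 0) * (if rel c x w then 1 else 0) *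
          (if rel d w v then 1 else 0)) *
        (if rel e x v then 1 else 0) := by
  rw [dualE_diag F x a, dualE_diag F x c, dualE_diag F x e,
    Matrix.mul_diagonal, Matrix.mul_apply]
  rw [Finset.mul_sum, Finset.sum_mul, Finset.sum_mul]
  refine Finset.sum_congr rfl fun w _ => ?_
  rw [Matrix.mul_diagonal, Matrix.diagonal_mul]
  show (if rel a x u then (1:F) else 0) * (Adj F b u w) *
      (if rel c x w then 1 else 0) * (Adj F d w v) * _ = _
  show (if rel a x u then (1:F) else 0) * (if rel b u w then 1 else 0) *
      (if rel c x w then 1 else 0) * (if rel d w v then 1 else 0) * _ = _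
  ring


lemma delta1 {G : Type} [Group G] (p : Fin 3) (u : G) (hu : u * u = 1) :
    ((if (2:Fin 3) = p then 1 else u) =
      (if (0:Fin 3) = p then 1 else u) * (if (1:Fin 3) = p then 1 else u)) := by
  fin_cases p <;> simp [hu]

lemma delta2 {G : Type} [Group G] (hsq : ∀ u : G, u * u = 1)
    (hcomm : ∀ u v : G, u * v = v * u) (p q : Fin 3) (hpq : p ≠ q) (u v : G) :
    ((if (2:Fin 3) = p then u else if (2:Fin 3) = q then v else u*v) =
     (if (0:Fin 3) = p then u else if (0:Fin 3) = q then v else u*v) *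
     (if (1:Fin 3) = p then u else if (1:Fin 3) = q then v else u*v)) := by
  have k1 : ∀ u v : G, u * (u * v) = v := fun u v => by rw [← mul_assoc, hsq, one_mul]
  have k2 : ∀ u v : G, (u * v) * v = u := fun u v => by rw [mul_assoc, hsq, mul_one]
  have k4 : ∀ u v w : G, u * (v * w) = v * (u * w) := by
    intro u v w; rw [← mul_assoc, hcomm u v, mul_assoc]
  fin_cases p <;> fin_cases q <;> simp_all

theorem stmt1 (F : Type) [Field F] (G : Type) [Group G] [Fintype G] [DecidableEq G]
    (helem : ∀ a : G, a ^ 2 = 1) (hcard : 4 < Fintype.card G)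
    (x : XG G) (g h i : Fin 5)
    (hghi : ({g, h, i} : Finset (Fin 5)) = {1, 2, 3}) :
    DualE F x g * Adj F h * DualE F x i * Adj F g * DualE F x 4 ∉
      Submodule.span F (genSet F G x) ∧
    DualE F x 4 * Adj F g * DualE F x i * Adj F h * DualE F x g ∉
      Submodule.span F (genSet F G x) := by
  -- basic group facts
  have hsq : ∀ u : G, u * u = 1 := fun u => by rw [← pow_two]; exact helem u
  have k1 : ∀ u v : G, u * (u * v) = v := fun u v => by rw [← mul_assoc, hsq, one_mul]
  have k2 : ∀ u v : G, (u * v) * v = u := fun u v => by rw [mul_assoc, hsq, mul_one]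
  have hcomm : ∀ u v : G, u * v = v * u := by
    intro u v
    have e1 : v * u = u * u * (v * (u * (v * v))) := by rw [hsq u, hsq v, one_mul, mul_one]
    have e2 : u * u * (v * (u * (v * v))) = u * ((u * v) * (u * v)) * v := by group
    rw [e1, e2, hsq (u*v), mul_one]
  have k4 : ∀ u v w : G, u * (v * w) = v * (u * w) := by
    intro u v w; rw [← mul_assoc, hcomm u v, mul_assoc]
  -- existence of elements
  have hnt : Nontrivial G := Fintype.one_lt_card_iff_nontrivial.mp (by omega)
  obtain ⟨a, ha1⟩ := exists_ne (1 : G)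
  have hbex : ∃ b : G, b ∉ ({1, a} : Finset G) := by
    by_contra hcon
    push_neg at hcon
    have hsub : (Finset.univ : Finset G) ⊆ {1, a} := fun t _ => hcon t
    have hle := Finset.card_le_card hsub
    have h2 : ({1, a} : Finset G).card ≤ 2 := by
      refine le_trans (Finset.card_insert_le _ _) ?_; simp
    rw [Finset.card_univ] at hle; omega
  obtain ⟨b, hb⟩ := hbex
  simp only [Finset.mem_insert, Finset.mem_singleton, not_or] at hb
  obtain ⟨hb1, hba⟩ := hb
  have hcex : ∃ c : G, c ∉ ({1, a, b, a*b} : Finset G) := by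
    by_contra hcon
    push_neg at hcon
    have hsub : (Finset.univ : Finset G) ⊆ {1, a, b, a*b} := fun t _ => hcon t
    have hle := Finset.card_le_card hsub
    have h2 : ({1, a, b, a*b} : Finset G).card ≤ 4 := by
      refine le_trans (Finset.card_insert_le _ _) ?_
      refine le_trans (Nat.succ_le_succ (Finset.card_insert_le _ _)) ?_
      refine le_trans (Nat.succ_le_succ (Nat.succ_le_succ (Finset.card_insert_le _ _))) ?_
      simp
    rw [Finset.card_univ] at hle; omega
  obtain ⟨c, hc⟩ := hcex
  simp only [Finset.mem_insert, Finset.mem_singleton, not_or] at hc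
  obtain ⟨hc1, hca, hcb, hcab⟩ := hc
  have hab1 : a * b ≠ 1 := by
    intro e
    exact hba (by rw [← mul_one a, ← hsq b, ← mul_assoc, e, one_mul])
  -- cancellation helpers
  have hne2 : ∀ (u t : G), t ≠ 1 → u ≠ u * t := by
    intro u t ht e
    exact ht (mul_left_cancel (show u * t = u * 1 by rw [mul_one, ← e]))
  have hmulne : ∀ (u s t : G), s ≠ t → u * s ≠ u * t := by
    intro u s t hst e; exact hst (mul_left_cancel e)
  have hptne : ∀ (u v : XG G) (d : Fin 3), u.1 d ≠ v.1 d → u ≠ v :=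
    fun u v d hd e => hd (by rw [e])
  -- index facts
  obtain ⟨hg3, hh3, hi3⟩ : (g=1∨g=2∨g=3) ∧ (h=1∨h=2∨h=3) ∧ (i=1∨i=2∨i=3) := by
    rcases fin5_perm g h i hghi with ⟨e1,e2,e3⟩|⟨e1,e2,e3⟩|⟨e1,e2,e3⟩|⟨e1,e2,e3⟩|⟨e1,e2,e3⟩|⟨e1,e2,e3⟩ <;>
      subst e1 <;> subst e2 <;> subst e3 <;> simp
  obtain ⟨hgh, hgi, hhi⟩ : g ≠ h ∧ g ≠ i ∧ h ≠ i := by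
    rcases fin5_perm g h i hghi with ⟨e1,e2,e3⟩|⟨e1,e2,e3⟩|⟨e1,e2,e3⟩|⟨e1,e2,e3⟩|⟨e1,e2,e3⟩|⟨e1,e2,e3⟩ <;>
      subst e1 <;> subst e2 <;> subst e3 <;> exact ⟨by decide, by decide, by decide⟩
  have hg0 : g ≠ 0 := by rcases hg3 with e|e|e <;> subst e <;> decide
  have hg4 : g ≠ 4 := by rcases hg3 with e|e|e <;> subst e <;> decide
  have hh0 : h ≠ 0 := by rcases hh3 with e|e|e <;> subst e <;> decide
  have hh4 : h ≠ 4 := by rcases hh3 with e|e|e <;> subst e <;> decide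
  have hi0 : i ≠ 0 := by rcases hi3 with e|e|e <;> subst e <;> decide
  have hi4 : i ≠ 4 := by rcases hi3 with e|e|e <;> subst e <;> decide
  have hpgh : cIdx g ≠ cIdx h := cIdx_inj g h hg3 hh3 hgh
  have hpgi : cIdx g ≠ cIdx i := cIdx_inj g i hg3 hi3 hgi
  have hphi : cIdx h ≠ cIdx i := cIdx_inj h i hh3 hi3 hhi
  have hcover : ∀ d : Fin 3, d = cIdx g ∨ d = cIdx h ∨ d = cIdx i :=
    fun d => fin3_cover (cIdx g) (cIdx h) (cIdx i) d hpgh hpgi hphi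
  -- constructor for shifted elements
  have hmk : ∀ δ : Fin 3 → G, δ 2 = δ 0 * δ 1 →
      (x.1 0 * δ 0) * (x.1 1 * δ 1) = x.1 2 * δ 2 := by
    intro δ hδ
    calc (x.1 0 * δ 0) * (x.1 1 * δ 1) = x.1 0 * ((δ 0 * x.1 1) * δ 1) := by group
      _ = x.1 0 * ((x.1 1 * δ 0) * δ 1) := by rw [hcomm (δ 0) (x.1 1)]
      _ = (x.1 0 * x.1 1) * (δ 0 * δ 1) := by group
      _ = x.1 2 * δ 2 := by rw [x.2, hδ]
  -- the witnesses
  let yy : XG G := ⟨fun d => x.1 d * (if d = cIdx g then 1 else a*b),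
    hmk (fun d => if d = cIdx g then 1 else a*b) (delta1 (cIdx g) (a*b) (hsq _))⟩
  let yy' : XG G := ⟨fun d => x.1 d * (if d = cIdx g then 1 else c),
    hmk (fun d => if d = cIdx g then 1 else c) (delta1 (cIdx g) c (hsq _))⟩
  let zz : XG G := ⟨fun d => x.1 d * (if d = cIdx h then a else if d = cIdx i then b else a*b),
    hmk (fun d => if d = cIdx h then a else if d = cIdx i then b else a*b)
      (delta2 hsq hcomm (cIdx h) (cIdx i) hphi a b)⟩
  let ww : XG G := ⟨fun d => x.1 d * (if d = cIdx i then 1 else a*b),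
    hmk (fun d => if d = cIdx i then 1 else a*b) (delta1 (cIdx i) (a*b) (hsq _))⟩
  -- coordinates
  have hyy_pg : yy.1 (cIdx g) = x.1 (cIdx g) := by
    show x.1 (cIdx g) * _ = _; rw [if_pos rfl, mul_one]
  have hyy_ph : yy.1 (cIdx h) = x.1 (cIdx h) * (a*b) := by
    show x.1 (cIdx h) * _ = _; rw [if_neg (Ne.symm hpgh)]
  have hyy_pi : yy.1 (cIdx i) = x.1 (cIdx i) * (a*b) := by
    show x.1 (cIdx i) * _ = _; rw [if_neg (Ne.symm hpgi)]
  have hyy'_pg : yy'.1 (cIdx g) = x.1 (cIdx g) := by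
    show x.1 (cIdx g) * _ = _; rw [if_pos rfl, mul_one]
  have hyy'_ph : yy'.1 (cIdx h) = x.1 (cIdx h) * c := by
    show x.1 (cIdx h) * _ = _; rw [if_neg (Ne.symm hpgh)]
  have hyy'_pi : yy'.1 (cIdx i) = x.1 (cIdx i) * c := by
    show x.1 (cIdx i) * _ = _; rw [if_neg (Ne.symm hpgi)]
  have hzz_pg : zz.1 (cIdx g) = x.1 (cIdx g) * (a*b) := by
    show x.1 (cIdx g) * _ = _; rw [if_neg hpgh, if_neg hpgi]
  have hzz_ph : zz.1 (cIdx h) = x.1 (cIdx h) * a := by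
    show x.1 (cIdx h) * _ = _; rw [if_pos rfl]
  have hzz_pi : zz.1 (cIdx i) = x.1 (cIdx i) * b := by
    show x.1 (cIdx i) * _ = _; rw [if_neg (Ne.symm hphi), if_pos rfl]
  have hww_pg : ww.1 (cIdx g) = x.1 (cIdx g) * (a*b) := by
    show x.1 (cIdx g) * _ = _; rw [if_neg hpgi]
  have hww_ph : ww.1 (cIdx h) = x.1 (cIdx h) * (a*b) := by
    show x.1 (cIdx h) * _ = _; rw [if_neg hphi]
  have hww_pi : ww.1 (cIdx i) = x.1 (cIdx i) := by
    show x.1 (cIdx i) * _ = _; rw [if_pos rfl, mul_one]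
  -- generic off-position values
  have hyy_off : ∀ p : Fin 3, p ≠ cIdx g → yy.1 p = x.1 p * (a*b) := by
    intro p hp; show x.1 p * _ = _; rw [if_neg hp]
  have hyy'_off : ∀ p : Fin 3, p ≠ cIdx g → yy'.1 p = x.1 p * c := by
    intro p hp; show x.1 p * _ = _; rw [if_neg hp]
  -- point distinctions
  have hxyy : x ≠ yy := hptne x yy (cIdx h) (by rw [hyy_ph]; exact hne2 _ _ hab1)
  have hxyy' : x ≠ yy' := hptne x yy' (cIdx h) (by rw [hyy'_ph]; exact hne2 _ _ hc1)
  have habne_a : a * b ≠ a := fun e => hb1 (mul_left_cancel (show a*b = a*1 by rw [mul_one, e]))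
  have habne_b : a * b ≠ b := fun e => ha1 (mul_right_cancel (show a*b = 1*b by rw [one_mul, e]))
  -- coordinate characterizations wrt x
  have hyc : ∀ p : Fin 3, (x.1 p = yy.1 p ↔ p = cIdx g) := by
    intro p
    by_cases hp : p = cIdx g
    · subst hp; rw [hyy_pg]; simp
    · rw [hyy_off p hp]
      simp only [hp, iff_false]
      exact hne2 _ _ hab1
  have hyc' : ∀ p : Fin 3, (x.1 p = yy'.1 p ↔ p = cIdx g) := by
    intro p
    by_cases hp : p = cIdx g
    · subst hp; rw [hyy'_pg]; simp
    · rw [hyy'_off p hp]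
      simp only [hp, iff_false]
      exact hne2 _ _ hc1
  -- R1 : x-relations of yy and yy' agree
  have R1 : ∀ j : Fin 5, rel j x yy ↔ rel j x yy' := by
    intro j
    by_cases j0 : j = 0
    · subst j0; rw [rel0_iff, rel0_iff]
      exact iff_of_false hxyy hxyy'
    by_cases j4 : j = 4
    · subst j4; rw [rel4_iff, rel4_iff]
      refine iff_of_false (fun H => H (cIdx g) hyy_pg.symm) (fun H => H (cIdx g) hyy'_pg.symm)
    · rw [relc_iff j j0 j4, relc_iff j j0 j4]
      constructor
      · rintro ⟨-, e⟩; exact ⟨hxyy', (hyc' _).mpr ((hyc _).mp e)⟩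
      · rintro ⟨-, e⟩; exact ⟨hxyy, (hyc _).mpr ((hyc' _).mp e)⟩
  -- all coordinates of yy (resp yy') differ from those of zz
  have hyz : ∀ d : Fin 3, yy.1 d ≠ zz.1 d := by
    intro d
    rcases hcover d with e|e|e <;> subst e
    · rw [hyy_pg, hzz_pg]; exact hne2 _ _ hab1
    · rw [hyy_ph, hzz_ph]; exact hmulne _ _ _ habne_a
    · rw [hyy_pi, hzz_pi]; exact hmulne _ _ _ habne_b
  have hyz' : ∀ d : Fin 3, yy'.1 d ≠ zz.1 d := by
    intro d
    rcases hcover d with e|e|e <;> subst e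
    · rw [hyy'_pg, hzz_pg]; exact hne2 _ _ hab1
    · rw [hyy'_ph, hzz_ph]; exact hmulne _ _ _ hca
    · rw [hyy'_pi, hzz_pi]; exact hmulne _ _ _ hcb
  -- R2 : zz-relations of yy and yy' agree
  have R2 : ∀ j : Fin 5, rel j yy zz ↔ rel j yy' zz := by
    intro j
    by_cases j0 : j = 0
    · subst j0; rw [rel0_iff, rel0_iff]
      exact iff_of_false (fun e => hyz 0 (by rw [e])) (fun e => hyz' 0 (by rw [e]))
    by_cases j4 : j = 4
    · subst j4; rw [rel4_iff, rel4_iff]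
      exact iff_of_true hyz hyz'
    · rw [relc_iff j j0 j4, relc_iff j j0 j4]
      exact iff_of_false (fun H => hyz _ H.2) (fun H => hyz' _ H.2)
  -- target relations
  have hgxy : rel g x yy := (relc_iff g hg0 hg4 x yy).mpr ⟨hxyy, hyy_pg.symm⟩
  have hgxy' : rel g x yy' := (relc_iff g hg0 hg4 x yy').mpr ⟨hxyy', hyy'_pg.symm⟩
  have h4xz : rel 4 x zz := by
    rw [rel4_iff]
    intro d
    rcases hcover d with e|e|e <;> subst e
    · rw [hzz_pg]; exact hne2 _ _ hab1
    · rw [hzz_ph]; exact hne2 _ _ ha1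
    · rw [hzz_pi]; exact hne2 _ _ hb1
  -- characterization of the unique middle point for (yy, zz)
  have hwchar : ∀ w : XG G, (rel h yy w ∧ rel i x w ∧ rel g w zz) ↔ w = ww := by
    intro w
    constructor
    · rintro ⟨H1, H2, H3⟩
      have e1 : yy.1 (cIdx h) = w.1 (cIdx h) := ((relc_iff h hh0 hh4 yy w).mp H1).2
      have e2 : x.1 (cIdx i) = w.1 (cIdx i) := ((relc_iff i hi0 hi4 x w).mp H2).2
      have e3 : w.1 (cIdx g) = zz.1 (cIdx g) := ((relc_iff g hg0 hg4 w zz).mp H3).2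
      apply Subtype.ext; funext d
      rcases hcover d with e|e|e <;> subst e
      · rw [e3, hzz_pg, hww_pg]
      · rw [← e1, hyy_ph, hww_ph]
      · rw [← e2, hww_pi]
    · rintro rfl
      refine ⟨?_, ?_, ?_⟩
      · exact (relc_iff h hh0 hh4 yy ww).mpr
          ⟨hptne yy ww (cIdx g) (by rw [hyy_pg, hww_pg]; exact hne2 _ _ hab1),
           by rw [hyy_ph, hww_ph]⟩
      · exact (relc_iff i hi0 hi4 x ww).mpr
          ⟨hptne x ww (cIdx h) (by rw [hww_ph]; exact hne2 _ _ hab1),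
           hww_pi.symm⟩
      · exact (relc_iff g hg0 hg4 ww zz).mpr
          ⟨hptne ww zz (cIdx i) (by rw [hww_pi, hzz_pi]; exact hne2 _ _ hb1),
           by rw [hww_pg, hzz_pg]⟩
  -- no middle point for (yy', zz)
  have hwchar' : ∀ w : XG G, ¬(rel h yy' w ∧ rel i x w ∧ rel g w zz) := by
    rintro w ⟨H1, H2, H3⟩
    have e1 : w.1 (cIdx h) = x.1 (cIdx h) * c := by
      rw [← ((relc_iff h hh0 hh4 yy' w).mp H1).2, hyy'_ph]
    have e2 : w.1 (cIdx i) = x.1 (cIdx i) :=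
      (((relc_iff i hi0 hi4 x w).mp H2).2).symm
    have e3 : w.1 (cIdx g) = x.1 (cIdx g) * (a*b) := by
      rw [((relc_iff g hg0 hg4 w zz).mp H3).2, hzz_pg]
    have hδrel : x.1 2 * w.1 2 = (x.1 0 * w.1 0) * (x.1 1 * w.1 1) := by
      rw [← w.2, ← x.2]
      calc x.1 0 * x.1 1 * (w.1 0 * w.1 1)
          = x.1 0 * ((x.1 1 * w.1 0) * w.1 1) := by group
        _ = x.1 0 * ((w.1 0 * x.1 1) * w.1 1) := by rw [hcomm (x.1 1) (w.1 0)]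
        _ = (x.1 0 * w.1 0) * (x.1 1 * w.1 1) := by group
    have dpg : x.1 (cIdx g) * w.1 (cIdx g) = a*b := by rw [e3, k1]
    have dph : x.1 (cIdx h) * w.1 (cIdx h) = c := by rw [e1, k1]
    have dpi : x.1 (cIdx i) * w.1 (cIdx i) = 1 := by rw [e2, hsq]
    rcases fin3_perm (cIdx g) (cIdx h) (cIdx i) hpgh hpgi hphi with
      ⟨e4,e5,e6⟩|⟨e4,e5,e6⟩|⟨e4,e5,e6⟩|⟨e4,e5,e6⟩|⟨e4,e5,e6⟩|⟨e4,e5,e6⟩ <;>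
        rw [e4] at dpg <;> rw [e5] at dph <;> rw [e6] at dpi <;>
        rw [dpg] at hδrel <;> rw [dph] at hδrel <;> rw [dpi] at hδrel
    · -- 1 = (a*b) * c
      exact hcab (by rw [← one_mul c, hδrel, k2])
    · -- c = (a*b) * 1
      exact hcab (by rw [hδrel, mul_one])
    · -- 1 = c * (a*b)
      exact hcab (by rw [← mul_one c, ← hsq (a*b), ← mul_assoc, ← hδrel, one_mul])
    · -- c = 1 * (a*b)
      exact hcab (by rw [hδrel, one_mul])
    · -- a*b = c * 1
      exact hcab (by rw [hδrel, mul_one])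
    · -- a*b = 1 * c
      exact hcab (by rw [hδrel, one_mul])
  -- the two sums
  have hsummand : ∀ w : XG G,
      (if rel h yy w then (1:F) else 0) * (if rel i x w then 1 else 0) *
        (if rel g w zz then 1 else 0) = if w = ww then 1 else 0 := by
    intro w
    by_cases hw : w = ww
    · obtain ⟨H1, H2, H3⟩ := (hwchar w).mpr hw
      rw [if_pos H1, if_pos H2, if_pos H3, if_pos hw]; ring
    · rw [if_neg hw]
      by_cases h1 : rel h yy w
      · by_cases h2 : rel i x w
        · by_cases h3 : rel g w zz
          · exact absurd ((hwchar w).mp ⟨h1, h2, h3⟩) hw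
          · rw [if_neg h3, mul_zero]
        · rw [if_neg h2, mul_zero, zero_mul]
      · rw [if_neg h1, zero_mul, zero_mul]
  have hsumyz : (∑ w : XG G, (if rel h yy w then (1:F) else 0) *
      (if rel i x w then 1 else 0) * (if rel g w zz then 1 else 0)) = 1 := by
    rw [Finset.sum_congr rfl fun w _ => hsummand w, Finset.sum_ite_eq' Finset.univ ww (fun _ => (1:F))]
    simp
  have hsumy'z : (∑ w : XG G, (if rel h yy' w then (1:F) else 0) *
      (if rel i x w then 1 else 0) * (if rel g w zz then 1 else 0)) = 0 := by
    refine Finset.sum_eq_zero fun w _ => ?_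
    by_cases h1 : rel h yy' w
    · by_cases h2 : rel i x w
      · by_cases h3 : rel g w zz
        · exact absurd ⟨h1, h2, h3⟩ (hwchar' w)
        · rw [if_neg h3, mul_zero]
      · rw [if_neg h2, mul_zero, zero_mul]
    · rw [if_neg h1, zero_mul, zero_mul]
  -- swapped summands for the transposed matrix
  have hswap : ∀ w : XG G,
      (if rel g zz w then (1:F) else 0) * (if rel i x w then 1 else 0) *
        (if rel h w yy then 1 else 0) =
      (if rel h yy w then (1:F) else 0) * (if rel i x w then 1 else 0) *
        (if rel g w zz then 1 else 0) := by
    intro w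
    rw [if_congr (rel_symm g zz w) rfl rfl, if_congr (rel_symm h w yy) rfl rfl]
    ring
  have hswap' : ∀ w : XG G,
      (if rel g zz w then (1:F) else 0) * (if rel i x w then 1 else 0) *
        (if rel h w yy' then 1 else 0) =
      (if rel h yy' w then (1:F) else 0) * (if rel i x w then 1 else 0) *
        (if rel g w zz then 1 else 0) := by
    intro w
    rw [if_congr (rel_symm g zz w) rfl rfl, if_congr (rel_symm h w yy') rfl rfl]
    ring
  constructor
  · -- first matrix
    intro hmem
    let φ : Matrix (XG G) (XG G) F →ₗ[F] F :=
      { toFun := fun M => M yy zz - M yy' zz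
        map_add' := fun M N => by simp [Matrix.add_apply]; ring
        map_smul' := fun r M => by simp [Matrix.smul_apply]; ring }
    have hle : Submodule.span F (genSet F G x) ≤ LinearMap.ker φ := by
      rw [Submodule.span_le]
      rintro M ⟨aa, bb, cc, rfl⟩
      simp only [SetLike.mem_coe, LinearMap.mem_ker]
      show (DualE F x aa * Adj F bb * DualE F x cc : Matrix (XG G) (XG G) F) yy zz -
        (DualE F x aa * Adj F bb * DualE F x cc : Matrix (XG G) (XG G) F) yy' zz = 0
      rw [gen_entry, gen_entry, if_congr (R1 aa) rfl rfl, if_congr (R2 bb) rfl rfl, sub_self]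
    have h0 := hle hmem
    rw [LinearMap.mem_ker] at h0
    have hv1 : φ (DualE F x g * Adj F h * DualE F x i * Adj F g * DualE F x 4) = 1 := by
      show (DualE F x g * Adj F h * DualE F x i * Adj F g * DualE F x 4 :
          Matrix (XG G) (XG G) F) yy zz -
        (DualE F x g * Adj F h * DualE F x i * Adj F g * DualE F x 4 :
          Matrix (XG G) (XG G) F) yy' zz = 1
      rw [big_entry, big_entry, if_pos hgxy, if_pos hgxy', if_pos h4xz, hsumyz, hsumy'z]
      ring
    rw [h0] at hv1
    exact zero_ne_one hv1
  · -- second matrix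
    intro hmem
    let ψ : Matrix (XG G) (XG G) F →ₗ[F] F :=
      { toFun := fun M => M zz yy - M zz yy'
        map_add' := fun M N => by simp [Matrix.add_apply]; ring
        map_smul' := fun r M => by simp [Matrix.smul_apply]; ring }
    have hle : Submodule.span F (genSet F G x) ≤ LinearMap.ker ψ := by
      rw [Submodule.span_le]
      rintro M ⟨aa, bb, cc, rfl⟩
      simp only [SetLike.mem_coe, LinearMap.mem_ker]
      show (DualE F x aa * Adj F bb * DualE F x cc : Matrix (XG G) (XG G) F) zz yy -
        (DualE F x aa * Adj F bb * DualE F x cc : Matrix (XG G) (XG G) F) zz yy' = 0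
      rw [gen_entry, gen_entry,
        if_congr ((rel_symm bb zz yy).trans ((R2 bb).trans (rel_symm bb yy' zz))) rfl rfl,
        if_congr (R1 cc) rfl rfl, sub_self]
    have h0 := hle hmem
    rw [LinearMap.mem_ker] at h0
    have hv1 : ψ (DualE F x 4 * Adj F g * DualE F x i * Adj F h * DualE F x g) = 1 := by
      show (DualE F x 4 * Adj F g * DualE F x i * Adj F h * DualE F x g :
          Matrix (XG G) (XG G) F) zz yy -
        (DualE F x 4 * Adj F g * DualE F x i * Adj F h * DualE F x g :
          Matrix (XG G) (XG G) F) zz yy' = 1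
      rw [big_entry, big_entry, if_pos h4xz, if_pos hgxy, if_pos hgxy',
        Finset.sum_congr rfl fun w _ => hswap w,
        Finset.sum_congr rfl fun w _ => hswap' w, hsumyz, hsumy'z]
      ring
    rw [h0] at hv1
    exact zero_ne_one hv1
end

section
/- Assume G is a Klein four group (elementary abelian 2-group of order 4) and {g,h,i} = {1,2,3}. Then E_g*A_hE_i*A_gE_4* = E_g*A_4E_4* and E_4*A_gE_i*A_hE_g* = E_4*A_4E_g*. -/
open Matrix

section grpX

variable {G : Type} [Group G]

lemma inv_self' (msq : ∀ a : G, a * a = 1) (a : G) : a⁻¹ = a := by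
  rw [inv_eq_iff_mul_eq_one, msq]

lemma comm' (msq : ∀ a : G, a * a = 1) (a b : G) : a * b = b * a := by
  have h1 : a * b = (a*b)⁻¹ := (inv_self' msq (a*b)).symm
  rw [_root_.mul_inv_rev, inv_self' msq, inv_self' msq] at h1
  exact h1

lemma sq2' (msq : ∀ a : G, a * a = 1) (a b : G) : a * (a * b) = b := by
  rw [← mul_assoc, msq, one_mul]

lemma eqiff (msq : ∀ a : G, a * a = 1) (a b : G) : a = b ↔ a * b = 1 := by
  constructor
  · rintro rfl; exact msq a
  · intro h; rw [mul_eq_one_iff_eq_inv, inv_self' msq] at h; exact h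

lemma triA (msq : ∀ a : G, a * a = 1) {p q r : G} (h : p * q * r = 1) : p = q * r := by
  have h' : p * (q * r) = 1 := by rw [← mul_assoc]; exact h
  rw [mul_eq_one_iff_eq_inv, inv_self' msq] at h'
  exact h'

lemma comb {u v w : G} (h1 : u = 1) (h2 : v = 1) (hw : w = u * v) : w = 1 := by
  rw [hw, h1, h2, one_mul]

lemma pigeon [Fintype G] [DecidableEq G] (msq : ∀ a : G, a * a = 1)
    (hcard : Fintype.card G = 4) (d s t : G)
    (h1 : d ≠ 1) (h2 : s ≠ 1) (h3 : t ≠ 1) (h4 : s ≠ d) (h5 : t ≠ d) (h6 : s ≠ t) :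
    s * d = t := by
  by_contra hne
  have hsd1 : s * d ≠ 1 := fun h => h4 (by
    have h' : s * d * d = 1 * d := by rw [h]
    rw [mul_assoc, msq, mul_one, one_mul] at h'; exact h')
  have hsdd : s * d ≠ d := fun h => h2 (mul_right_cancel (b := d) (by rw [one_mul]; exact h))
  have hsds : s * d ≠ s := fun h => h1 (mul_left_cancel (a := s) (by rw [mul_one]; exact h))
  have hc : ({1, d, s, t, s*d} : Finset G).card = 5 := by
    rw [Finset.card_insert_of_notMem (by
      simp only [Finset.mem_insert, Finset.mem_singleton]; push_neg
      exact ⟨Ne.symm h1, Ne.symm h2, Ne.symm h3, Ne.symm hsd1⟩)]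
    rw [Finset.card_insert_of_notMem (by
      simp only [Finset.mem_insert, Finset.mem_singleton]; push_neg
      exact ⟨Ne.symm h4, Ne.symm h5, Ne.symm hsdd⟩)]
    rw [Finset.card_insert_of_notMem (by
      simp only [Finset.mem_insert, Finset.mem_singleton]; push_neg
      exact ⟨h6, Ne.symm hsds⟩)]
    rw [Finset.card_insert_of_notMem (by
      simp only [Finset.mem_singleton]; exact fun h => hne h.symm)]
    simp
  have hle := Finset.card_le_univ ({1, d, s, t, s*d} : Finset G)
  simp only [hc, Finset.card_univ, hcard] at hle
  omega

lemma main_eq [Fintype G] [DecidableEq G] (msq : ∀ a : G, a * a = 1)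
    (hcard : Fintype.card G = 4)
    (X0 X1 X2 Y1 Y2 Z0 Z1 Z2 : G)
    (hx : X0 * X1 * X2 = 1) (hy : X0 * Y1 * Y2 = 1) (hz : Z0 * Z1 * Z2 = 1)
    (hY1 : Y1 ≠ X1) (hZ0 : Z0 ≠ X0) (hZ1 : Z1 ≠ X1) (hZ2 : Z2 ≠ X2) :
    Z0 = Y1 * X2 ↔ (Z1 ≠ Y1 ∧ Z2 ≠ Y2) := by
  letI : CommGroup G := { (inferInstance : Group G) with mul_comm := comm' msq }
  have s2 : ∀ a b : G, a * (a * b) = b := sq2' msq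
  constructor
  · intro h
    have h' : Z0 * (Y1 * X2) = 1 := (eqiff msq _ _).mp h
    constructor
    · intro hq
      apply hZ2
      apply (eqiff msq _ _).mpr
      exact comb (comb hz h' rfl) ((eqiff msq _ _).mp hq)
        (by simp only [mul_comm, mul_left_comm, mul_assoc, msq, s2, one_mul, mul_one])
    · intro hq
      apply hZ1
      apply (eqiff msq _ _).mpr
      exact comb (comb (comb hz h' rfl) hy rfl) (comb hx ((eqiff msq _ _).mp hq) rfl)
        (by simp only [mul_comm, mul_left_comm, mul_assoc, msq, s2, one_mul, mul_one])
  · rintro ⟨hzy1, hzy2⟩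
    have key := pigeon msq hcard (X1*Y1) (Z1*X1) (Z2*X2)
      (fun hc => hY1 ((eqiff msq Y1 X1).mpr (by rw [mul_comm]; exact hc)))
      (fun hc => hZ1 ((eqiff msq _ _).mpr hc))
      (fun hc => hZ2 ((eqiff msq _ _).mpr hc))
      (fun hc => hzy1 ((eqiff msq Z1 Y1).mpr
        (comb ((eqiff msq _ _).mp hc) rfl
          (by simp only [mul_comm, mul_left_comm, mul_assoc, msq, s2, one_mul, mul_one]))))
      (fun hc => hzy2 ((eqiff msq Z2 Y2).mpr
        (comb ((eqiff msq _ _).mp hc) (comb hx hy rfl)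
          (by simp only [mul_comm, mul_left_comm, mul_assoc, msq, s2, one_mul, mul_one]))))
      (fun hc => hZ0 ((eqiff msq Z0 X0).mpr
        (comb ((eqiff msq _ _).mp hc) (comb hx hz rfl)
          (by simp only [mul_comm, mul_left_comm, mul_assoc, msq, s2, one_mul, mul_one]))))
    exact (eqiff msq Z0 (Y1*X2)).mpr
      (comb ((eqiff msq _ _).mp key) hz
        (by simp only [mul_comm, mul_left_comm, mul_assoc, msq, s2, one_mul, mul_one]))
end grpX

section xgX

variable {G : Type} [Group G]

lemma rel_one (y z : XG G) : rel 1 y z ↔ y ≠ z ∧ y.1 0 = z.1 0 := by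
  simp [rel, cIdx]
lemma rel_two (y z : XG G) : rel 2 y z ↔ y ≠ z ∧ y.1 1 = z.1 1 := by
  simp [rel, cIdx]
lemma rel_three (y z : XG G) : rel 3 y z ↔ y ≠ z ∧ y.1 2 = z.1 2 := by
  simp [rel, cIdx]
lemma rel_four (y z : XG G) : rel 4 y z ↔ ∀ d, y.1 d ≠ z.1 d := by
  simp [rel]

lemma inv_self'' (msq : ∀ a : G, a * a = 1) (a : G) : a⁻¹ = a := by
  rw [inv_eq_iff_mul_eq_one, msq]

lemma sq2'' (msq : ∀ a : G, a * a = 1) (a b : G) : a * (a * b) = b := by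
  rw [← mul_assoc, msq, one_mul]

lemma prod3 (msq : ∀ a : G, a * a = 1) (v : XG G) : v.1 0 * v.1 1 * v.1 2 = 1 := by
  rw [v.2, msq]

lemma xg_ext01 (u v : XG G) (h0 : u.1 0 = v.1 0) (h1 : u.1 1 = v.1 1) : u = v := by
  apply Subtype.ext; funext d
  fin_cases d
  · exact h0
  · exact h1
  · show u.1 2 = v.1 2
    rw [← u.2, ← v.2, h0, h1]

lemma xg_ext02 (msq : ∀ a : G, a * a = 1) (u v : XG G)
    (h0 : u.1 0 = v.1 0) (h2 : u.1 2 = v.1 2) : u = v := by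
  apply xg_ext01 u v h0
  have hu : u.1 0 * u.1 2 = u.1 1 := by rw [← u.2]; exact sq2'' msq _ _
  have hv : v.1 0 * v.1 2 = v.1 1 := by rw [← v.2]; exact sq2'' msq _ _
  rw [← hu, ← hv, h0, h2]

lemma xg_ext12 (msq : ∀ a : G, a * a = 1) (u v : XG G)
    (h1 : u.1 1 = v.1 1) (h2 : u.1 2 = v.1 2) : u = v := by
  apply xg_ext01 u v ?_ h1
  have hu : u.1 2 * u.1 1 = u.1 0 := by
    rw [← u.2, mul_assoc, msq, mul_one]
  have hv : v.1 2 * v.1 1 = v.1 0 := by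
    rw [← v.2, mul_assoc, msq, mul_one]
  rw [← hu, ← hv, h1, h2]
end xgX

section coresX
variable {G : Type} [Group G] [Fintype G] [DecidableEq G]

lemma core123 (msq : ∀ a : G, a * a = 1) (hcard : Fintype.card G = 4)
    (x y z : XG G) (hy : rel 1 x y) (hz : rel 4 x z) :
    ∃ w0 : XG G, ∀ w : XG G,
      (rel 2 y w ∧ rel 3 x w ∧ rel 1 w z) ↔ ((∀ d, y.1 d ≠ z.1 d) ∧ w = w0) := by
  letI : CommGroup G := { (inferInstance : Group G) with mul_comm := comm' msq }
  obtain ⟨hxy, ea⟩ := (rel_one x y).mp hy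
  have zd : ∀ d, x.1 d ≠ z.1 d := (rel_four x z).mp hz
  have yb : y.1 1 ≠ x.1 1 := fun hq => hxy (xg_ext01 x y ea hq.symm)
  have yc : y.1 2 ≠ x.1 2 := fun hq => hxy (xg_ext02 msq x y ea hq.symm)
  have hx' : x.1 0 * x.1 1 * x.1 2 = 1 := by
    simpa [mul_comm, mul_left_comm, mul_assoc] using prod3 msq x
  have hy' : x.1 0 * y.1 1 * y.1 2 = 1 := by
    rw [ea]; simpa [mul_comm, mul_left_comm, mul_assoc] using prod3 msq y
  have hz' : z.1 0 * z.1 1 * z.1 2 = 1 := by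
    simpa [mul_comm, mul_left_comm, mul_assoc] using prod3 msq z
  have ME := main_eq msq hcard (x.1 0) (x.1 1) (x.1 2) (y.1 1) (y.1 2)
    (z.1 0) (z.1 1) (z.1 2) hx' hy' hz' yb (Ne.symm (zd 0)) (Ne.symm (zd 1)) (Ne.symm (zd 2))
  refine ⟨⟨![y.1 1 * x.1 2, y.1 1, x.1 2], by
    show (y.1 1 * x.1 2) * (y.1 1) = x.1 2
    simp only [mul_comm, mul_left_comm, mul_assoc, msq, sq2'' msq, one_mul, mul_one]⟩, ?_⟩
  intro w
  constructor
  · rintro ⟨h2', h3', h1'⟩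
    obtain ⟨hyw, hb⟩ := (rel_two y w).mp h2'
    obtain ⟨hxw, hc2⟩ := (rel_three x w).mp h3'
    obtain ⟨hwz, ha⟩ := (rel_one w z).mp h1'
    have hw' : w.1 0 * w.1 1 * w.1 2 = 1 := by
      simpa [mul_comm, mul_left_comm, mul_assoc] using prod3 msq w
    have hw0 : w.1 0 = w.1 1 * w.1 2 := triA msq hw'
    have hZ0eq : z.1 0 = y.1 1 * x.1 2 := by rw [← ha, hw0, ← hb, ← hc2]
    obtain ⟨m1, m2⟩ := ME.mp hZ0eq
    refine ⟨?_, ?_⟩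
    · intro d
      fin_cases d
      · show y.1 0 ≠ z.1 0
        rw [← ea]; exact zd 0
      · exact Ne.symm m1
      · exact Ne.symm m2
    · exact xg_ext12 msq w _ (by show w.1 1 = y.1 1; exact hb.symm) (by show w.1 2 = x.1 2; exact hc2.symm)
  · rintro ⟨h4, rfl⟩
    have hZ0eq : z.1 0 = y.1 1 * x.1 2 := ME.mpr ⟨Ne.symm (h4 1), Ne.symm (h4 2)⟩
    refine ⟨(rel_two _ _).mpr ⟨?_, ?_⟩, (rel_three _ _).mpr ⟨?_, ?_⟩,
      (rel_one _ _).mpr ⟨?_, ?_⟩⟩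
    · intro hq
      exact yc ((congrArg (fun t => t.1 2) hq).trans rfl)
    · show y.1 1 = y.1 1
      rfl
    · intro hq
      exact yb (((congrArg (fun t => t.1 1) hq).trans rfl).symm)
    · show x.1 2 = x.1 2
      rfl
    · intro hq
      exact zd 2 ((congrArg (fun t => t.1 2) hq.symm).trans rfl).symm
    · show y.1 1 * x.1 2 = z.1 0
      exact hZ0eq.symm

lemma core132 (msq : ∀ a : G, a * a = 1) (hcard : Fintype.card G = 4)
    (x y z : XG G) (hy : rel 1 x y) (hz : rel 4 x z) :
    ∃ w0 : XG G, ∀ w : XG G,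
      (rel 3 y w ∧ rel 2 x w ∧ rel 1 w z) ↔ ((∀ d, y.1 d ≠ z.1 d) ∧ w = w0) := by
  letI : CommGroup G := { (inferInstance : Group G) with mul_comm := comm' msq }
  obtain ⟨hxy, ea⟩ := (rel_one x y).mp hy
  have zd : ∀ d, x.1 d ≠ z.1 d := (rel_four x z).mp hz
  have yb : y.1 2 ≠ x.1 2 := fun hq => hxy (xg_ext02 msq x y ea hq.symm)
  have yc : y.1 1 ≠ x.1 1 := fun hq => hxy (xg_ext01 x y ea hq.symm)
  have hx' : x.1 0 * x.1 2 * x.1 1 = 1 := by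
    simpa [mul_comm, mul_left_comm, mul_assoc] using prod3 msq x
  have hy' : x.1 0 * y.1 2 * y.1 1 = 1 := by
    rw [ea]; simpa [mul_comm, mul_left_comm, mul_assoc] using prod3 msq y
  have hz' : z.1 0 * z.1 2 * z.1 1 = 1 := by
    simpa [mul_comm, mul_left_comm, mul_assoc] using prod3 msq z
  have ME := main_eq msq hcard (x.1 0) (x.1 2) (x.1 1) (y.1 2) (y.1 1)
    (z.1 0) (z.1 2) (z.1 1) hx' hy' hz' yb (Ne.symm (zd 0)) (Ne.symm (zd 2)) (Ne.symm (zd 1))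
  refine ⟨⟨![y.1 2 * x.1 1, x.1 1, y.1 2], by
    show (y.1 2 * x.1 1) * (x.1 1) = y.1 2
    simp only [mul_comm, mul_left_comm, mul_assoc, msq, sq2'' msq, one_mul, mul_one]⟩, ?_⟩
  intro w
  constructor
  · rintro ⟨h2', h3', h1'⟩
    obtain ⟨hyw, hb⟩ := (rel_three y w).mp h2'
    obtain ⟨hxw, hc2⟩ := (rel_two x w).mp h3'
    obtain ⟨hwz, ha⟩ := (rel_one w z).mp h1'
    have hw' : w.1 0 * w.1 2 * w.1 1 = 1 := by
      simpa [mul_comm, mul_left_comm, mul_assoc] using prod3 msq w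
    have hw0 : w.1 0 = w.1 2 * w.1 1 := triA msq hw'
    have hZ0eq : z.1 0 = y.1 2 * x.1 1 := by rw [← ha, hw0, ← hb, ← hc2]
    obtain ⟨m1, m2⟩ := ME.mp hZ0eq
    refine ⟨?_, ?_⟩
    · intro d
      fin_cases d
      · show y.1 0 ≠ z.1 0
        rw [← ea]; exact zd 0
      · exact Ne.symm m2
      · exact Ne.symm m1
    · exact xg_ext12 msq w _ (by show w.1 1 = x.1 1; exact hc2.symm) (by show w.1 2 = y.1 2; exact hb.symm)
  · rintro ⟨h4, rfl⟩
    have hZ0eq : z.1 0 = y.1 2 * x.1 1 := ME.mpr ⟨Ne.symm (h4 2), Ne.symm (h4 1)⟩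
    refine ⟨(rel_three _ _).mpr ⟨?_, ?_⟩, (rel_two _ _).mpr ⟨?_, ?_⟩,
      (rel_one _ _).mpr ⟨?_, ?_⟩⟩
    · intro hq
      exact yc ((congrArg (fun t => t.1 1) hq).trans rfl)
    · show y.1 2 = y.1 2
      rfl
    · intro hq
      exact yb (((congrArg (fun t => t.1 2) hq).trans rfl).symm)
    · show x.1 1 = x.1 1
      rfl
    · intro hq
      exact zd 1 ((congrArg (fun t => t.1 1) hq.symm).trans rfl).symm
    · show y.1 2 * x.1 1 = z.1 0
      exact hZ0eq.symm

lemma core213 (msq : ∀ a : G, a * a = 1) (hcard : Fintype.card G = 4)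
    (x y z : XG G) (hy : rel 2 x y) (hz : rel 4 x z) :
    ∃ w0 : XG G, ∀ w : XG G,
      (rel 1 y w ∧ rel 3 x w ∧ rel 2 w z) ↔ ((∀ d, y.1 d ≠ z.1 d) ∧ w = w0) := by
  letI : CommGroup G := { (inferInstance : Group G) with mul_comm := comm' msq }
  obtain ⟨hxy, ea⟩ := (rel_two x y).mp hy
  have zd : ∀ d, x.1 d ≠ z.1 d := (rel_four x z).mp hz
  have yb : y.1 0 ≠ x.1 0 := fun hq => hxy (xg_ext01 x y hq.symm ea)
  have yc : y.1 2 ≠ x.1 2 := fun hq => hxy (xg_ext12 msq x y ea hq.symm)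
  have hx' : x.1 1 * x.1 0 * x.1 2 = 1 := by
    simpa [mul_comm, mul_left_comm, mul_assoc] using prod3 msq x
  have hy' : x.1 1 * y.1 0 * y.1 2 = 1 := by
    rw [ea]; simpa [mul_comm, mul_left_comm, mul_assoc] using prod3 msq y
  have hz' : z.1 1 * z.1 0 * z.1 2 = 1 := by
    simpa [mul_comm, mul_left_comm, mul_assoc] using prod3 msq z
  have ME := main_eq msq hcard (x.1 1) (x.1 0) (x.1 2) (y.1 0) (y.1 2)
    (z.1 1) (z.1 0) (z.1 2) hx' hy' hz' yb (Ne.symm (zd 1)) (Ne.symm (zd 0)) (Ne.symm (zd 2))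
  refine ⟨⟨![y.1 0, y.1 0 * x.1 2, x.1 2], by
    show (y.1 0) * (y.1 0 * x.1 2) = x.1 2
    simp only [mul_comm, mul_left_comm, mul_assoc, msq, sq2'' msq, one_mul, mul_one]⟩, ?_⟩
  intro w
  constructor
  · rintro ⟨h2', h3', h1'⟩
    obtain ⟨hyw, hb⟩ := (rel_one y w).mp h2'
    obtain ⟨hxw, hc2⟩ := (rel_three x w).mp h3'
    obtain ⟨hwz, ha⟩ := (rel_two w z).mp h1'
    have hw' : w.1 1 * w.1 0 * w.1 2 = 1 := by
      simpa [mul_comm, mul_left_comm, mul_assoc] using prod3 msq w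
    have hw0 : w.1 1 = w.1 0 * w.1 2 := triA msq hw'
    have hZ0eq : z.1 1 = y.1 0 * x.1 2 := by rw [← ha, hw0, ← hb, ← hc2]
    obtain ⟨m1, m2⟩ := ME.mp hZ0eq
    refine ⟨?_, ?_⟩
    · intro d
      fin_cases d
      · exact Ne.symm m1
      · show y.1 1 ≠ z.1 1
        rw [← ea]; exact zd 1
      · exact Ne.symm m2
    · exact xg_ext02 msq w _ (by show w.1 0 = y.1 0; exact hb.symm) (by show w.1 2 = x.1 2; exact hc2.symm)
  · rintro ⟨h4, rfl⟩
    have hZ0eq : z.1 1 = y.1 0 * x.1 2 := ME.mpr ⟨Ne.symm (h4 0), Ne.symm (h4 2)⟩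
    refine ⟨(rel_one _ _).mpr ⟨?_, ?_⟩, (rel_three _ _).mpr ⟨?_, ?_⟩,
      (rel_two _ _).mpr ⟨?_, ?_⟩⟩
    · intro hq
      exact yc ((congrArg (fun t => t.1 2) hq).trans rfl)
    · show y.1 0 = y.1 0
      rfl
    · intro hq
      exact yb (((congrArg (fun t => t.1 0) hq).trans rfl).symm)
    · show x.1 2 = x.1 2
      rfl
    · intro hq
      exact zd 2 ((congrArg (fun t => t.1 2) hq.symm).trans rfl).symm
    · show y.1 0 * x.1 2 = z.1 1
      exact hZ0eq.symm

lemma core231 (msq : ∀ a : G, a * a = 1) (hcard : Fintype.card G = 4)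
    (x y z : XG G) (hy : rel 2 x y) (hz : rel 4 x z) :
    ∃ w0 : XG G, ∀ w : XG G,
      (rel 3 y w ∧ rel 1 x w ∧ rel 2 w z) ↔ ((∀ d, y.1 d ≠ z.1 d) ∧ w = w0) := by
  letI : CommGroup G := { (inferInstance : Group G) with mul_comm := comm' msq }
  obtain ⟨hxy, ea⟩ := (rel_two x y).mp hy
  have zd : ∀ d, x.1 d ≠ z.1 d := (rel_four x z).mp hz
  have yb : y.1 2 ≠ x.1 2 := fun hq => hxy (xg_ext12 msq x y ea hq.symm)
  have yc : y.1 0 ≠ x.1 0 := fun hq => hxy (xg_ext01 x y hq.symm ea)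
  have hx' : x.1 1 * x.1 2 * x.1 0 = 1 := by
    simpa [mul_comm, mul_left_comm, mul_assoc] using prod3 msq x
  have hy' : x.1 1 * y.1 2 * y.1 0 = 1 := by
    rw [ea]; simpa [mul_comm, mul_left_comm, mul_assoc] using prod3 msq y
  have hz' : z.1 1 * z.1 2 * z.1 0 = 1 := by
    simpa [mul_comm, mul_left_comm, mul_assoc] using prod3 msq z
  have ME := main_eq msq hcard (x.1 1) (x.1 2) (x.1 0) (y.1 2) (y.1 0)
    (z.1 1) (z.1 2) (z.1 0) hx' hy' hz' yb (Ne.symm (zd 1)) (Ne.symm (zd 2)) (Ne.symm (zd 0))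
  refine ⟨⟨![x.1 0, y.1 2 * x.1 0, y.1 2], by
    show (x.1 0) * (y.1 2 * x.1 0) = y.1 2
    simp only [mul_comm, mul_left_comm, mul_assoc, msq, sq2'' msq, one_mul, mul_one]⟩, ?_⟩
  intro w
  constructor
  · rintro ⟨h2', h3', h1'⟩
    obtain ⟨hyw, hb⟩ := (rel_three y w).mp h2'
    obtain ⟨hxw, hc2⟩ := (rel_one x w).mp h3'
    obtain ⟨hwz, ha⟩ := (rel_two w z).mp h1'
    have hw' : w.1 1 * w.1 2 * w.1 0 = 1 := by
      simpa [mul_comm, mul_left_comm, mul_assoc] using prod3 msq w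
    have hw0 : w.1 1 = w.1 2 * w.1 0 := triA msq hw'
    have hZ0eq : z.1 1 = y.1 2 * x.1 0 := by rw [← ha, hw0, ← hb, ← hc2]
    obtain ⟨m1, m2⟩ := ME.mp hZ0eq
    refine ⟨?_, ?_⟩
    · intro d
      fin_cases d
      · exact Ne.symm m2
      · show y.1 1 ≠ z.1 1
        rw [← ea]; exact zd 1
      · exact Ne.symm m1
    · exact xg_ext02 msq w _ (by show w.1 0 = x.1 0; exact hc2.symm) (by show w.1 2 = y.1 2; exact hb.symm)
  · rintro ⟨h4, rfl⟩
    have hZ0eq : z.1 1 = y.1 2 * x.1 0 := ME.mpr ⟨Ne.symm (h4 2), Ne.symm (h4 0)⟩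
    refine ⟨(rel_three _ _).mpr ⟨?_, ?_⟩, (rel_one _ _).mpr ⟨?_, ?_⟩,
      (rel_two _ _).mpr ⟨?_, ?_⟩⟩
    · intro hq
      exact yc ((congrArg (fun t => t.1 0) hq).trans rfl)
    · show y.1 2 = y.1 2
      rfl
    · intro hq
      exact yb (((congrArg (fun t => t.1 2) hq).trans rfl).symm)
    · show x.1 0 = x.1 0
      rfl
    · intro hq
      exact zd 0 ((congrArg (fun t => t.1 0) hq.symm).trans rfl).symm
    · show y.1 2 * x.1 0 = z.1 1
      exact hZ0eq.symm

lemma core312 (msq : ∀ a : G, a * a = 1) (hcard : Fintype.card G = 4)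
    (x y z : XG G) (hy : rel 3 x y) (hz : rel 4 x z) :
    ∃ w0 : XG G, ∀ w : XG G,
      (rel 1 y w ∧ rel 2 x w ∧ rel 3 w z) ↔ ((∀ d, y.1 d ≠ z.1 d) ∧ w = w0) := by
  letI : CommGroup G := { (inferInstance : Group G) with mul_comm := comm' msq }
  obtain ⟨hxy, ea⟩ := (rel_three x y).mp hy
  have zd : ∀ d, x.1 d ≠ z.1 d := (rel_four x z).mp hz
  have yb : y.1 0 ≠ x.1 0 := fun hq => hxy (xg_ext02 msq x y hq.symm ea)
  have yc : y.1 1 ≠ x.1 1 := fun hq => hxy (xg_ext12 msq x y hq.symm ea)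
  have hx' : x.1 2 * x.1 0 * x.1 1 = 1 := by
    simpa [mul_comm, mul_left_comm, mul_assoc] using prod3 msq x
  have hy' : x.1 2 * y.1 0 * y.1 1 = 1 := by
    rw [ea]; simpa [mul_comm, mul_left_comm, mul_assoc] using prod3 msq y
  have hz' : z.1 2 * z.1 0 * z.1 1 = 1 := by
    simpa [mul_comm, mul_left_comm, mul_assoc] using prod3 msq z
  have ME := main_eq msq hcard (x.1 2) (x.1 0) (x.1 1) (y.1 0) (y.1 1)
    (z.1 2) (z.1 0) (z.1 1) hx' hy' hz' yb (Ne.symm (zd 2)) (Ne.symm (zd 0)) (Ne.symm (zd 1))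
  refine ⟨⟨![y.1 0, x.1 1, y.1 0 * x.1 1], by
    show (y.1 0) * (x.1 1) = y.1 0 * x.1 1
    simp only [mul_comm, mul_left_comm, mul_assoc, msq, sq2'' msq, one_mul, mul_one]⟩, ?_⟩
  intro w
  constructor
  · rintro ⟨h2', h3', h1'⟩
    obtain ⟨hyw, hb⟩ := (rel_one y w).mp h2'
    obtain ⟨hxw, hc2⟩ := (rel_two x w).mp h3'
    obtain ⟨hwz, ha⟩ := (rel_three w z).mp h1'
    have hw' : w.1 2 * w.1 0 * w.1 1 = 1 := by
      simpa [mul_comm, mul_left_comm, mul_assoc] using prod3 msq w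
    have hw0 : w.1 2 = w.1 0 * w.1 1 := triA msq hw'
    have hZ0eq : z.1 2 = y.1 0 * x.1 1 := by rw [← ha, hw0, ← hb, ← hc2]
    obtain ⟨m1, m2⟩ := ME.mp hZ0eq
    refine ⟨?_, ?_⟩
    · intro d
      fin_cases d
      · exact Ne.symm m1
      · exact Ne.symm m2
      · show y.1 2 ≠ z.1 2
        rw [← ea]; exact zd 2
    · exact xg_ext01 w _ (by show w.1 0 = y.1 0; exact hb.symm) (by show w.1 1 = x.1 1; exact hc2.symm)
  · rintro ⟨h4, rfl⟩
    have hZ0eq : z.1 2 = y.1 0 * x.1 1 := ME.mpr ⟨Ne.symm (h4 0), Ne.symm (h4 1)⟩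
    refine ⟨(rel_one _ _).mpr ⟨?_, ?_⟩, (rel_two _ _).mpr ⟨?_, ?_⟩,
      (rel_three _ _).mpr ⟨?_, ?_⟩⟩
    · intro hq
      exact yc ((congrArg (fun t => t.1 1) hq).trans rfl)
    · show y.1 0 = y.1 0
      rfl
    · intro hq
      exact yb (((congrArg (fun t => t.1 0) hq).trans rfl).symm)
    · show x.1 1 = x.1 1
      rfl
    · intro hq
      exact zd 1 ((congrArg (fun t => t.1 1) hq.symm).trans rfl).symm
    · show y.1 0 * x.1 1 = z.1 2
      exact hZ0eq.symm

lemma core321 (msq : ∀ a : G, a * a = 1) (hcard : Fintype.card G = 4)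
    (x y z : XG G) (hy : rel 3 x y) (hz : rel 4 x z) :
    ∃ w0 : XG G, ∀ w : XG G,
      (rel 2 y w ∧ rel 1 x w ∧ rel 3 w z) ↔ ((∀ d, y.1 d ≠ z.1 d) ∧ w = w0) := by
  letI : CommGroup G := { (inferInstance : Group G) with mul_comm := comm' msq }
  obtain ⟨hxy, ea⟩ := (rel_three x y).mp hy
  have zd : ∀ d, x.1 d ≠ z.1 d := (rel_four x z).mp hz
  have yb : y.1 1 ≠ x.1 1 := fun hq => hxy (xg_ext12 msq x y hq.symm ea)
  have yc : y.1 0 ≠ x.1 0 := fun hq => hxy (xg_ext02 msq x y hq.symm ea)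
  have hx' : x.1 2 * x.1 1 * x.1 0 = 1 := by
    simpa [mul_comm, mul_left_comm, mul_assoc] using prod3 msq x
  have hy' : x.1 2 * y.1 1 * y.1 0 = 1 := by
    rw [ea]; simpa [mul_comm, mul_left_comm, mul_assoc] using prod3 msq y
  have hz' : z.1 2 * z.1 1 * z.1 0 = 1 := by
    simpa [mul_comm, mul_left_comm, mul_assoc] using prod3 msq z
  have ME := main_eq msq hcard (x.1 2) (x.1 1) (x.1 0) (y.1 1) (y.1 0)
    (z.1 2) (z.1 1) (z.1 0) hx' hy' hz' yb (Ne.symm (zd 2)) (Ne.symm (zd 1)) (Ne.symm (zd 0))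
  refine ⟨⟨![x.1 0, y.1 1, y.1 1 * x.1 0], by
    show (x.1 0) * (y.1 1) = y.1 1 * x.1 0
    simp only [mul_comm, mul_left_comm, mul_assoc, msq, sq2'' msq, one_mul, mul_one]⟩, ?_⟩
  intro w
  constructor
  · rintro ⟨h2', h3', h1'⟩
    obtain ⟨hyw, hb⟩ := (rel_two y w).mp h2'
    obtain ⟨hxw, hc2⟩ := (rel_one x w).mp h3'
    obtain ⟨hwz, ha⟩ := (rel_three w z).mp h1'
    have hw' : w.1 2 * w.1 1 * w.1 0 = 1 := by
      simpa [mul_comm, mul_left_comm, mul_assoc] using prod3 msq w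
    have hw0 : w.1 2 = w.1 1 * w.1 0 := triA msq hw'
    have hZ0eq : z.1 2 = y.1 1 * x.1 0 := by rw [← ha, hw0, ← hb, ← hc2]
    obtain ⟨m1, m2⟩ := ME.mp hZ0eq
    refine ⟨?_, ?_⟩
    · intro d
      fin_cases d
      · exact Ne.symm m2
      · exact Ne.symm m1
      · show y.1 2 ≠ z.1 2
        rw [← ea]; exact zd 2
    · exact xg_ext01 w _ (by show w.1 0 = x.1 0; exact hc2.symm) (by show w.1 1 = y.1 1; exact hb.symm)
  · rintro ⟨h4, rfl⟩
    have hZ0eq : z.1 2 = y.1 1 * x.1 0 := ME.mpr ⟨Ne.symm (h4 1), Ne.symm (h4 0)⟩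
    refine ⟨(rel_two _ _).mpr ⟨?_, ?_⟩, (rel_one _ _).mpr ⟨?_, ?_⟩,
      (rel_three _ _).mpr ⟨?_, ?_⟩⟩
    · intro hq
      exact yc ((congrArg (fun t => t.1 0) hq).trans rfl)
    · show y.1 1 = y.1 1
      rfl
    · intro hq
      exact yb (((congrArg (fun t => t.1 1) hq).trans rfl).symm)
    · show x.1 0 = x.1 0
      rfl
    · intro hq
      exact zd 0 ((congrArg (fun t => t.1 0) hq.symm).trans rfl).symm
    · show y.1 1 * x.1 0 = z.1 2
      exact hZ0eq.symm

end coresX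

section mats
variable {G : Type} [Group G] [Fintype G] [DecidableEq G] (F : Type) [Field F]

lemma dual_mul (x : XG G) (a : Fin 5) (M : Matrix (XG G) (XG G) F) :
    DualE F x a * M = Matrix.of fun y z => if rel a x y then M y z else 0 := by
  ext y z
  simp only [Matrix.mul_apply, DualE, Matrix.of_apply]
  rw [Finset.sum_eq_single y]
  · by_cases hr : rel a x y <;> simp [hr]
  · intro b _ hb
    simp [Ne.symm hb]
  · intro hy; exact absurd (Finset.mem_univ y) hy

lemma mul_dual (x : XG G) (c : Fin 5) (M : Matrix (XG G) (XG G) F) :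
    M * DualE F x c = Matrix.of fun y z => if rel c x z then M y z else 0 := by
  ext y z
  simp only [Matrix.mul_apply, DualE, Matrix.of_apply]
  rw [Finset.sum_eq_single z]
  · by_cases hr : rel c x z <;> simp [hr]
  · intro b _ hb
    simp [hb]
  · intro hz; exact absurd (Finset.mem_univ z) hz

lemma adj_dual_adj (x : XG G) (b c d : Fin 5) (y z : XG G) :
    (Adj F b * DualE F x c * Adj F d : Matrix (XG G) (XG G) F) y z
      = ∑ w : XG G, if rel b y w ∧ rel c x w ∧ rel d w z then (1:F) else 0 := by
  rw [mul_dual]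
  simp only [Matrix.mul_apply, Matrix.of_apply, Adj]
  apply Finset.sum_congr rfl
  intro w _
  by_cases h1 : rel b y w <;> by_cases h2 : rel c x w <;> by_cases h3 : rel d w z <;>
    simp [h1, h2, h3]

lemma sandwich (x : XG G) (a c : Fin 5) (M N : Matrix (XG G) (XG G) F)
    (hk : ∀ y z, rel a x y → rel c x z → M y z = N y z) :
    DualE F x a * M * DualE F x c = DualE F x a * N * DualE F x c := by
  rw [mul_dual, dual_mul, dual_mul, mul_dual]
  ext y z
  simp only [Matrix.of_apply]
  by_cases h1 : rel a x y <;> by_cases h2 : rel c x z <;> simp [h1, h2]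
  exact hk y z h1 h2

lemma sum_eval (P : XG G → Prop) [DecidablePred P] (Q : Prop) [Decidable Q] (w0 : XG G)
    (hiff : ∀ w, P w ↔ (Q ∧ w = w0)) :
    (∑ w : XG G, if P w then (1:F) else 0) = if Q then 1 else 0 := by
  have : ∀ w : XG G, (if P w then (1:F) else 0) = if Q ∧ w = w0 then 1 else 0 := by
    intro w; exact if_congr (hiff w) rfl rfl
  rw [Finset.sum_congr rfl (fun w _ => this w)]
  by_cases hq : Q
  · simp [hq, Finset.sum_ite_eq' Finset.univ w0 (fun _ => (1:F))]
  · simp [hq]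

lemma rel_symm' (b : Fin 5) (y z : XG G) : rel b y z ↔ rel b z y := by
  unfold rel
  split_ifs
  · exact eq_comm
  · constructor <;> intro hq d <;> exact (hq d).symm
  · constructor <;> (rintro ⟨h1, h2⟩; exact ⟨Ne.symm h1, h2.symm⟩)

lemma dual_transpose (x : XG G) (a : Fin 5) : (DualE F x a)ᵀ = DualE F x a := by
  ext y z
  simp only [Matrix.transpose_apply, DualE, Matrix.of_apply]
  by_cases hyz : y = z
  · subst hyz; rfl
  · simp [hyz, Ne.symm hyz]

lemma adj_transpose (b : Fin 5) : (Adj F (G := G) b)ᵀ = Adj F b := by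
  ext y z
  simp only [Matrix.transpose_apply, Adj, Matrix.of_apply]
  exact if_congr (rel_symm' b z y) rfl rfl

lemma coreAll (msq : ∀ a : G, a * a = 1) (hcard : Fintype.card G = 4)
    (x : XG G) (g h i : Fin 5) (hghi : ({g, h, i} : Finset (Fin 5)) = {1, 2, 3})
    (y z : XG G) (hy : rel g x y) (hz : rel 4 x z) :
    ∃ w0 : XG G, ∀ w : XG G,
      (rel h y w ∧ rel i x w ∧ rel g w z) ↔ ((∀ d, y.1 d ≠ z.1 d) ∧ w = w0) := by
  have hcases : (g=1∧h=2∧i=3)∨(g=1∧h=3∧i=2)∨(g=2∧h=1∧i=3)∨(g=2∧h=3∧i=1)∨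
      (g=3∧h=1∧i=2)∨(g=3∧h=2∧i=1) := by
    revert hghi
    fin_cases g <;> fin_cases h <;> fin_cases i <;> decide
  rcases hcases with ⟨rfl,rfl,rfl⟩|⟨rfl,rfl,rfl⟩|⟨rfl,rfl,rfl⟩|⟨rfl,rfl,rfl⟩|⟨rfl,rfl,rfl⟩|⟨rfl,rfl,rfl⟩
  · exact core123 msq hcard x y z hy hz
  · exact core132 msq hcard x y z hy hz
  · exact core213 msq hcard x y z hy hz
  · exact core231 msq hcard x y z hy hz
  · exact core312 msq hcard x y z hy hz
  · exact core321 msq hcard x y z hy hz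

lemma mainOne (msq : ∀ a : G, a * a = 1) (hcard : Fintype.card G = 4)
    (x : XG G) (g h i : Fin 5) (hghi : ({g, h, i} : Finset (Fin 5)) = {1, 2, 3}) :
    DualE F x g * Adj F h * DualE F x i * Adj F g * DualE F x 4
      = DualE F x g * Adj F 4 * DualE F x 4 := by
  have hassoc : DualE F x g * Adj F h * DualE F x i * Adj F g * DualE F x 4
      = DualE F x g * (Adj F h * DualE F x i * Adj F g) * DualE F x 4 := by
    simp only [mul_assoc]
  rw [hassoc]
  apply sandwich
  intro y z hy hz
  obtain ⟨w0, hiff⟩ := coreAll msq hcard x g h i hghi y z hy hz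
  rw [adj_dual_adj, sum_eval F _ _ w0 hiff]
  show _ = Adj F 4 y z
  simp only [Adj, Matrix.of_apply]
  exact if_congr (Iff.symm (rel_four y z)) rfl rfl
end mats

theorem stmt2 (F : Type) [Field F] (G : Type) [Group G] [Fintype G] [DecidableEq G]
    (helem : ∀ a : G, a ^ 2 = 1) (hcard : Fintype.card G = 4)
    (x : XG G) (g h i : Fin 5)
    (hghi : ({g, h, i} : Finset (Fin 5)) = {1, 2, 3}) :
    DualE F x g * Adj F h * DualE F x i * Adj F g * DualE F x 4
      = DualE F x g * Adj F 4 * DualE F x 4 ∧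
    DualE F x 4 * Adj F g * DualE F x i * Adj F h * DualE F x g
      = DualE F x 4 * Adj F 4 * DualE F x g := by
  have msq : ∀ a : G, a * a = 1 := fun a => by rw [← pow_two]; exact helem a
  have h1 := mainOne F msq hcard x g h i hghi
  refine ⟨h1, ?_⟩
  have h2 := congrArg Matrix.transpose h1
  simp only [Matrix.transpose_mul, dual_transpose, adj_transpose] at h2
  simp only [mul_assoc] at h2 ⊢
  exact h2
end

section
/- Assume G is an elementary abelian 2-group, the characteristic of F is p = 2, and n = |G| = 8. Then E_4*A_1E_2*A_3E_4* + E_4*A_1E_3*A_2E_4* + E_4*A_2E_1*A_3E_4* + E_4*A_2E_3*A_1E_4* + E_4*A_3E_1*A_2E_4* + E_4*A_3E_2*A_1E_4* = E_4*A_4E_4*. -/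
open Matrix

section Aux

variable {F : Type} [Field F] {G : Type} [Group G] [Fintype G] [DecidableEq G]

theorem hr1' (yy zz : XG G) : rel 1 yy zz ↔ (yy ≠ zz ∧ yy.1 0 = zz.1 0) := by
  unfold rel
  rw [if_neg (by decide), if_neg (by decide)]
  rfl

theorem hr2' (yy zz : XG G) : rel 2 yy zz ↔ (yy ≠ zz ∧ yy.1 1 = zz.1 1) := by
  unfold rel
  rw [if_neg (by decide), if_neg (by decide)]
  rfl

theorem hr3' (yy zz : XG G) : rel 3 yy zz ↔ (yy ≠ zz ∧ yy.1 2 = zz.1 2) := by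
  unfold rel
  rw [if_neg (by decide), if_neg (by decide)]
  rfl

theorem hr4' (yy zz : XG G) : rel 4 yy zz ↔ ∀ d : Fin 3, yy.1 d ≠ zz.1 d := by
  unfold rel
  rw [if_neg (by decide), if_pos rfl]

theorem hD' (x : XG G) (i : Fin 5) :
    DualE F x i = Matrix.diagonal (fun w => if rel i x w then (1:F) else 0) := by
  ext a b
  by_cases hab : a = b
  · subst hab; simp [DualE, Matrix.diagonal]
  · simp [DualE, Matrix.diagonal, hab, Ne.symm hab]

theorem hentry' (x : XG G) (a b c : Fin 5) (y z : XG G) :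
    ((DualE F x 4 * Adj F a * DualE F x b * Adj F c * DualE F x 4 :
        Matrix (XG G) (XG G) F)) y z =
      (if rel 4 x y then (1:F) else 0) * (if rel 4 x z then (1:F) else 0) *
        ∑ w : XG G, (if rel a y w then (1:F) else 0) *
          ((if rel b x w then (1:F) else 0) * (if rel c w z then (1:F) else 0)) := by
  rw [hD' x 4, hD' x b]
  rw [Matrix.mul_diagonal, Matrix.mul_apply]
  simp only [Matrix.mul_diagonal, Matrix.diagonal_mul, Adj, Matrix.of_apply]
  rw [Finset.sum_mul, Finset.mul_sum]
  exact Finset.sum_congr rfl (fun w _ => by ring)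

theorem piece' (x y z : XG G) (hy : ∀ d, x.1 d ≠ y.1 d) (hz : ∀ d, x.1 d ≠ z.1 d)
    (α β γ : Fin 3) (hperm : ∀ d : Fin 3, d = α ∨ d = β ∨ d = γ)
    (v : Fin 3 → G) (hvα : v α = y.1 α) (hvβ : v β = x.1 β) (hvγ : v γ = z.1 γ) :
    ∑ w : XG G, (if (y ≠ w ∧ y.1 α = w.1 α) then (1:F) else 0) *
      ((if (x ≠ w ∧ x.1 β = w.1 β) then (1:F) else 0) *
       (if (w ≠ z ∧ w.1 γ = z.1 γ) then (1:F) else 0)) =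
    if v 0 * v 1 = v 2 then 1 else 0 := by
  have hterm : ∀ w : XG G,
      (if (y ≠ w ∧ y.1 α = w.1 α) then (1:F) else 0) *
      ((if (x ≠ w ∧ x.1 β = w.1 β) then (1:F) else 0) *
       (if (w ≠ z ∧ w.1 γ = z.1 γ) then (1:F) else 0)) =
      if w.1 = v then (1:F) else 0 := by
    intro w
    by_cases hwv : w.1 = v
    · have h1 : y.1 α = w.1 α := by rw [hwv, hvα]
      have h2 : x.1 β = w.1 β := by rw [hwv, hvβ]
      have h3 : w.1 γ = z.1 γ := by rw [hwv, hvγ]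
      have hwy : y ≠ w := fun h => hy β (by rw [h]; exact h2)
      have hwx : x ≠ w := fun h => hy α (by rw [h, hwv]; exact hvα)
      have hwz : w ≠ z := fun h => hz β (by rw [← h]; exact h2)
      rw [if_pos hwv, if_pos ⟨hwy, h1⟩, if_pos ⟨hwx, h2⟩, if_pos ⟨hwz, h3⟩]; ring
    · rw [if_neg hwv]
      by_cases c1 : y ≠ w ∧ y.1 α = w.1 α
      · by_cases c2 : x ≠ w ∧ x.1 β = w.1 β
        · by_cases c3 : w ≠ z ∧ w.1 γ = z.1 γ
          · exfalso; apply hwv; funext d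
            rcases hperm d with h | h | h <;> subst h
            · rw [hvα]; exact c1.2.symm
            · rw [hvβ]; exact c2.2.symm
            · rw [hvγ]; exact c3.2
          · rw [if_neg c3]; simp
        · rw [if_neg c2]; simp
      · rw [if_neg c1]; simp
  rw [Finset.sum_congr rfl (fun w _ => hterm w)]
  by_cases hvv : v 0 * v 1 = v 2
  · rw [if_pos hvv]
    rw [Finset.sum_eq_single (⟨v, hvv⟩ : XG G)]
    · rw [if_pos rfl]
    · intro w _ hw; rw [if_neg (fun h => hw (Subtype.ext h))]
    · intro h; exact absurd (Finset.mem_univ _) h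
  · rw [if_neg hvv]
    apply Finset.sum_eq_zero; intro w _
    exact if_neg (fun h : w.1 = v => hvv (h ▸ w.2))

end Aux

section Key2
variable {F : Type} [Field F] {G : Type} [CommGroup G] [Fintype G] [DecidableEq G]

theorem keylem (h2 : (1:F) + 1 = 0) (hsq : ∀ a : G, a * a = 1)
    (hcard : Fintype.card G = 8)
    (u v p q : G) (hu : u ≠ 1) (hv : v ≠ 1) (hp : p ≠ 1) (hq : q ≠ 1)
    (huv : u ≠ v) (hpq : p ≠ q) :
    (if u = p*q then (1:F) else 0) + (if u = q then 1 else 0) +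
    (if v = p*q then 1 else 0) + (if v = p then 1 else 0) +
    (if q = u*v then 1 else 0) + (if p = u*v then 1 else 0) =
      if u ≠ p ∧ v ≠ q ∧ u*v ≠ p*q then 1 else 0 := by
  have hcan : ∀ a b : G, a * (a * b) = b := fun a b => by
    rw [← mul_assoc, hsq, one_mul]
  have hone : ∀ a b : G, a * b = 1 → a = b := fun a b h => by
    have hb : b⁻¹ = b := inv_eq_of_mul_eq_one_right (hsq b)
    rw [← hb]; exact eq_inv_of_mul_eq_one_left h
  by_cases hup : u = p
  · have hn1 : ¬(u = p*q) := fun h => hq (left_eq_mul.mp (hup.symm.trans h))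
    have hn2 : ¬(u = q) := fun h => hpq (hup.symm.trans h)
    have hn4 : ¬(v = p) := fun h => huv (hup.trans h.symm)
    have hn6 : ¬(p = u*v) := fun h => hv (by
      rw [hup] at h; exact left_eq_mul.mp h)
    have h35 : (v = p*q) ↔ (q = u*v) := by
      constructor
      · intro h; rw [hup, h, hcan]
      · intro h; rw [← hup, h, hcan]
    have hnT : ¬(u ≠ p ∧ v ≠ q ∧ u*v ≠ p*q) := fun h => h.1 hup
    rw [if_neg hn1, if_neg hn2, if_neg hn4, if_neg hn6, if_neg hnT]
    by_cases h3 : v = p*q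
    · rw [if_pos h3, if_pos (h35.mp h3)]; linear_combination h2
    · rw [if_neg h3, if_neg (fun h => h3 (h35.mpr h))]; ring
  · by_cases hvq : v = q
    · have hn2 : ¬(u = q) := fun h => huv (h.trans hvq.symm)
      have hn3 : ¬(v = p*q) := fun h => hp (right_eq_mul.mp (hvq.symm.trans h))
      have hn4 : ¬(v = p) := fun h => hpq (h.symm.trans hvq)
      have hn5 : ¬(q = u*v) := fun h => hu (by
        rw [← hvq] at h; exact right_eq_mul.mp h)
      have h16 : (u = p*q) ↔ (p = u*v) := by
        constructor
        · intro h; rw [h, hvq, mul_assoc, hsq, mul_one]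
        · intro h; rw [h, hvq, mul_assoc, hsq, mul_one]
      have hnT : ¬(u ≠ p ∧ v ≠ q ∧ u*v ≠ p*q) := fun h => h.2.1 hvq
      rw [if_neg hn2, if_neg hn3, if_neg hn4, if_neg hn5, if_neg hnT]
      by_cases h1 : u = p*q
      · rw [if_pos h1, if_pos (h16.mp h1)]; linear_combination h2
      · rw [if_neg h1, if_neg (fun h => h1 (h16.mpr h))]; ring
    · by_cases hm : u*v = p*q
      · have hn1 : ¬(u = p*q) := fun h => hv (left_eq_mul.mp (h.trans hm.symm))
        have hn3 : ¬(v = p*q) := fun h => hu (right_eq_mul.mp (h.trans hm.symm))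
        have hn5 : ¬(q = u*v) := fun h => hp (right_eq_mul.mp (h.trans hm))
        have hn6 : ¬(p = u*v) := fun h => hq (left_eq_mul.mp (h.trans hm))
        have h24 : (u = q) ↔ (v = p) := by
          constructor
          · intro h
            have h' : u * v = u * p := by rw [hm, ← h, mul_comm]
            exact mul_left_cancel h'
          · intro h
            have h' : u * v = q * v := by rw [hm, h, mul_comm]
            exact mul_right_cancel h'
        have hnT : ¬(u ≠ p ∧ v ≠ q ∧ u*v ≠ p*q) := fun h => h.2.2 hm
        rw [if_neg hn1, if_neg hn3, if_neg hn5, if_neg hn6, if_neg hnT]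
        by_cases h2c : u = q
        · rw [if_pos h2c, if_pos (h24.mp h2c)]; linear_combination h2
        · rw [if_neg h2c, if_neg (fun h => h2c (h24.mpr h))]; ring
      · -- main case: target is true
        have hT : u ≠ p ∧ v ≠ q ∧ u*v ≠ p*q := ⟨hup, hvq, hm⟩
        rw [if_pos hT]
        by_cases h1 : u = p*q
        · have hn2 : ¬(u = q) := fun h => hp (right_eq_mul.mp (h.symm.trans h1))
          have hn3 : ¬(v = p*q) := fun h => huv (h1.trans h.symm)
          rw [if_pos h1, if_neg hn2, if_neg hn3]
          by_cases h4 : v = p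
          · have h5 : q = u*v := by
              rw [h1, h4, mul_comm p q, mul_assoc, hsq, mul_one]
            have hn6 : ¬(p = u*v) := fun h => hpq (h.trans h5.symm)
            rw [if_pos h4, if_pos h5, if_neg hn6]; linear_combination h2
          · have hn5 : ¬(q = u*v) := fun h => h4 (by
              rw [← hcan u v, ← h, h1, mul_assoc, hsq, mul_one])
            have hn6 : ¬(p = u*v) := fun h => hvq (by
              have h' : u = u * (v*q) := by rw [← mul_assoc, ← h]; exact h1
              exact hone v q (left_eq_mul.mp h'))
            rw [if_neg h4, if_neg hn5, if_neg hn6]; ring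
        · by_cases h2c : u = q
          · have hn4 : ¬(v = p) := fun h => hm (by rw [h2c, h, mul_comm])
            have hn5 : ¬(q = u*v) := fun h => hv
              (left_eq_mul.mp (h2c.trans h))
            rw [if_neg h1, if_pos h2c, if_neg hn4, if_neg hn5]
            by_cases h3 : v = p*q
            · have h6 : p = u*v := by
                rw [h2c, h3, mul_comm p q, ← mul_assoc, hsq, one_mul]
              rw [if_pos h3, if_pos h6]; linear_combination h2
            · have hn6 : ¬(p = u*v) := fun h => h3 (by
                rw [← hcan u v, ← h, h2c, mul_comm q p])
              rw [if_neg h3, if_neg hn6]; ring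
          · by_cases h3 : v = p*q
            · have hn4 : ¬(v = p) := fun h => hq
                (left_eq_mul.mp (h.symm.trans h3))
              have hn5 : ¬(q = u*v) := fun h => hup (by
                have h' : q = (u*p)*q := by rw [mul_assoc, ← h3]; exact h
                exact hone u p (right_eq_mul.mp h'))
              have hn6 : ¬(p = u*v) := fun h => h2c (by
                have h' : p = (u*q)*p := by
                  rw [mul_assoc, mul_comm q p, ← h3]; exact h
                exact hone u q (right_eq_mul.mp h'))
              rw [if_neg h1, if_neg h2c, if_pos h3, if_neg hn4, if_neg hn5,
                if_neg hn6]; ring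
            · by_cases h4 : v = p
              · have hn5 : ¬(q = u*v) := fun h => h1 (by
                  rw [← h4, ← hcan v u, mul_comm v u, ← h])
                have hn6 : ¬(p = u*v) := fun h => hu
                  (right_eq_mul.mp (h.trans (show u*v = u*p by rw [h4])))
                rw [if_neg h1, if_neg h2c, if_neg h3, if_pos h4, if_neg hn5,
                  if_neg hn6]; ring
              · by_cases h5 : q = u*v
                · have hn6 : ¬(p = u*v) := fun h => hpq (h.trans h5.symm)
                  rw [if_neg h1, if_neg h2c, if_neg h3, if_neg h4, if_pos h5,
                    if_neg hn6]; ring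
                · by_cases h6 : p = u*v
                  · rw [if_neg h1, if_neg h2c, if_neg h3, if_neg h4, if_neg h5,
                      if_pos h6]; ring
                  · -- independence contradiction
                    exfalso
                    set f : Bool × Bool × Bool × Bool → G := fun s =>
                      ((if s.1 then u else 1) * (if s.2.1 then v else 1)) *
                      ((if s.2.2.1 then p else 1) * (if s.2.2.2 then q else 1)) with hf
                    have hb : ∀ (a b : Bool) (g : G),
                        (if a then g else 1) * (if b then g else 1) =
                          if xor a b then g else 1 := by
                      intro a b g; cases a <;> cases b <;> simp [hsq g]
                    have hmul : ∀ a b c d a' b' c' d' : Bool,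
                        f (a, b, c, d) * f (a', b', c', d') =
                          f (xor a a', xor b b', xor c c', xor d d') := by
                      intro a b c d a' b' c' d'
                      simp only [hf]
                      rw [mul_mul_mul_comm,
                        mul_mul_mul_comm (if a then u else 1) (if b then v else 1),
                        mul_mul_mul_comm (if c then p else 1) (if d then q else 1),
                        hb, hb, hb, hb]
                    have hzero : ∀ s : Bool × Bool × Bool × Bool, f s = 1 →
                        s = (false, false, false, false) := by
                      rintro ⟨a, b, c, d⟩ h
                      cases a <;> cases b <;> cases c <;> cases d <;>
                        simp only [hf] at h <;>
                        simp only [Bool.false_eq_true, Bool.true_eq_false, if_true,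
                          if_false, ite_true, ite_false, one_mul, mul_one] at h
                      · rfl
                      · exact absurd h hq
                      · exact absurd h hp
                      · exact absurd (hone p q h) hpq
                      · exact absurd h hv
                      · exact absurd (hone v q h) hvq
                      · exact absurd (hone v p h) h4
                      · exact absurd ((hone v (p*q) h)) h3
                      · exact absurd h hu
                      · exact absurd (hone u q h) h2c
                      · exact absurd (hone u p h) hup
                      · exact absurd (hone u (p*q) h) h1
                      · exact absurd (hone u v h) huv
                      · exact absurd (hone (u*v) q h).symm h5
                      · exact absurd (hone (u*v) p h).symm h6
                      · exact absurd (hone (u*v) (p*q) h) hm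
                    have hinj : Function.Injective f := by
                      rintro ⟨a, b, c, d⟩ ⟨a', b', c', d'⟩ hst
                      have h1' : f (xor a a', xor b b', xor c c', xor d d') = 1 := by
                        rw [← hmul, hst, hmul, Bool.xor_self, Bool.xor_self,
                          Bool.xor_self, Bool.xor_self]
                        simp only [hf]
                        norm_num
                      have h0 := hzero _ h1'
                      simp only [Prod.mk.injEq] at h0 ⊢
                      obtain ⟨e1, e2, e3, e4⟩ := h0
                      have hxf : ∀ x y : Bool, xor x y = false → x = y := by decide
                      exact ⟨hxf _ _ e1, hxf _ _ e2, hxf _ _ e3, hxf _ _ e4⟩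
                    have h16 : (16 : ℕ) ≤ 8 := by
                      calc (16 : ℕ) = Fintype.card (Bool × Bool × Bool × Bool) := by
                            simp
                        _ ≤ Fintype.card G := Fintype.card_le_of_injective f hinj
                        _ = 8 := hcard
                    omega

end Key2

theorem stmt7 (F : Type) [Field F] (G : Type) [Group G] [Fintype G] [DecidableEq G]
    (hp : ringChar F = 2)
    (helem : ∀ a : G, a ^ 2 = 1) (hcard : Fintype.card G = 8)
    (x : XG G) :
    DualE F x 4 * Adj F 1 * DualE F x 2 * Adj F 3 * DualE F x 4 +
    DualE F x 4 * Adj F 1 * DualE F x 3 * Adj F 2 * DualE F x 4 +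
    DualE F x 4 * Adj F 2 * DualE F x 1 * Adj F 3 * DualE F x 4 +
    DualE F x 4 * Adj F 2 * DualE F x 3 * Adj F 1 * DualE F x 4 +
    DualE F x 4 * Adj F 3 * DualE F x 1 * Adj F 2 * DualE F x 4 +
    DualE F x 4 * Adj F 3 * DualE F x 2 * Adj F 1 * DualE F x 4 =
      DualE F x 4 * Adj F 4 * DualE F x 4 := by
  have h2 : (1:F) + 1 = 0 := by
    have h := ringChar.Nat.cast_ringChar (R := F)
    rw [hp] at h
    norm_num at h
    linear_combination h
  have hsq : ∀ a : G, a * a = 1 := fun a => by rw [← pow_two]; exact helem a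
  have hinv : ∀ a : G, a⁻¹ = a := fun a => inv_eq_of_mul_eq_one_right (hsq a)
  have hcomm : ∀ a b : G, a * b = b * a := fun a b => by
    calc a * b = (a*b)⁻¹ := (hinv _).symm
      _ = b⁻¹ * a⁻¹ := mul_inv_rev a b
      _ = b * a := by rw [hinv, hinv]
  letI : CommGroup G := { (inferInstance : Group G) with mul_comm := hcomm }
  have hone : ∀ a b : G, a * b = 1 → a = b := fun a b h => by
    rw [← hinv b]; exact eq_inv_of_mul_eq_one_left h
  have hcan : ∀ a b : G, a * (a * b) = b := fun a b => by
    rw [← mul_assoc, hsq, one_mul]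
  have heq : ∀ g h : G, (g = h) ↔ (g * h = 1) := fun g h =>
    ⟨fun e => e ▸ hsq g, hone g h⟩
  have conv : ∀ g h g' h' : G, g * h = g' * h' → ((g = h) ↔ (g' = h')) := by
    intro g h g' h' e; rw [heq g h, heq g' h', e]
  ext y z
  simp only [Matrix.add_apply]
  rw [hentry' x 1 2 3 y z, hentry' x 1 3 2 y z, hentry' x 2 1 3 y z,
    hentry' x 2 3 1 y z, hentry' x 3 1 2 y z, hentry' x 3 2 1 y z]
  rw [hD' x 4, Matrix.mul_diagonal, Matrix.diagonal_mul]
  by_cases hy : rel 4 x y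
  · by_cases hz : rel 4 x z
    · rw [if_pos hy, if_pos hz]
      simp only [one_mul, mul_one]
      have hy' : ∀ d, x.1 d ≠ y.1 d := (hr4' x y).mp hy
      have hz' : ∀ d, x.1 d ≠ z.1 d := (hr4' x z).mp hz
      simp only [hr1', hr2', hr3']
      rw [piece' x y z hy' hz' 0 1 2 (by decide) ![y.1 0, x.1 1, z.1 2]
            (by simp) (by simp) (by simp),
          piece' x y z hy' hz' 0 2 1 (by decide) ![y.1 0, z.1 1, x.1 2]
            (by simp) (by simp) (by simp),
          piece' x y z hy' hz' 1 0 2 (by decide) ![x.1 0, y.1 1, z.1 2]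
            (by simp) (by simp) (by simp),
          piece' x y z hy' hz' 1 2 0 (by decide) ![z.1 0, y.1 1, x.1 2]
            (by simp) (by simp) (by simp),
          piece' x y z hy' hz' 2 0 1 (by decide) ![x.1 0, z.1 1, y.1 2]
            (by simp) (by simp) (by simp),
          piece' x y z hy' hz' 2 1 0 (by decide) ![z.1 0, x.1 1, y.1 2]
            (by simp) (by simp) (by simp)]
      simp only [Matrix.cons_val_zero, Matrix.cons_val_one, Matrix.head_cons,
        Matrix.cons_val_two, Matrix.tail_cons, Adj, Matrix.of_apply, hr4']
      set u : G := y.1 0 * x.1 0 with hu_def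
      set vv : G := y.1 1 * x.1 1 with hvv_def
      set p : G := z.1 0 * x.1 0 with hp_def
      set q : G := z.1 1 * x.1 1 with hq_def
      have e1 : (y.1 0 * x.1 1 = z.1 2) ↔ (u = p*q) :=
        conv _ _ u (p*q) (by
          rw [hu_def, hp_def, hq_def, ← z.2]
          simp [mul_comm, mul_left_comm, mul_assoc, hcan])
      have e2 : (y.1 0 * z.1 1 = x.1 2) ↔ (u = q) :=
        conv _ _ u q (by
          rw [hu_def, hq_def, ← x.2]
          simp [mul_comm, mul_left_comm, mul_assoc, hcan])
      have e3 : (x.1 0 * y.1 1 = z.1 2) ↔ (vv = p*q) :=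
        conv _ _ vv (p*q) (by
          rw [hvv_def, hp_def, hq_def, ← z.2]
          simp [mul_comm, mul_left_comm, mul_assoc, hcan])
      have e4 : (z.1 0 * y.1 1 = x.1 2) ↔ (vv = p) :=
        conv _ _ vv p (by
          rw [hvv_def, hp_def, ← x.2]
          simp [mul_comm, mul_left_comm, mul_assoc, hcan])
      have e5 : (x.1 0 * z.1 1 = y.1 2) ↔ (q = u*vv) :=
        conv _ _ q (u*vv) (by
          rw [hu_def, hvv_def, hq_def, ← y.2]
          simp [mul_comm, mul_left_comm, mul_assoc, hcan])
      have e6 : (z.1 0 * x.1 1 = y.1 2) ↔ (p = u*vv) :=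
        conv _ _ p (u*vv) (by
          rw [hu_def, hvv_def, hp_def, ← y.2]
          simp [mul_comm, mul_left_comm, mul_assoc, hcan])
      have i0 : (y.1 0 = z.1 0) ↔ (u = p) :=
        conv _ _ u p (by
          rw [hu_def, hp_def]
          simp [mul_comm, mul_left_comm, mul_assoc, hcan])
      have i1 : (y.1 1 = z.1 1) ↔ (vv = q) :=
        conv _ _ vv q (by
          rw [hvv_def, hq_def]
          simp [mul_comm, mul_left_comm, mul_assoc, hcan])
      have i2 : (y.1 2 = z.1 2) ↔ (u*vv = p*q) :=
        conv _ _ (u*vv) (p*q) (by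
          rw [hu_def, hvv_def, hp_def, hq_def, ← y.2, ← z.2]
          simp [mul_comm, mul_left_comm, mul_assoc, hcan])
      have cT : (∀ d : Fin 3, y.1 d ≠ z.1 d) ↔ (u ≠ p ∧ vv ≠ q ∧ u*vv ≠ p*q) := by
        constructor
        · intro h
          exact ⟨fun e => h 0 (i0.mpr e), fun e => h 1 (i1.mpr e),
            fun e => h 2 (i2.mpr e)⟩
        · rintro ⟨n0, n1, n2⟩ d
          have hd : d = 0 ∨ d = 1 ∨ d = 2 := by omega
          rcases hd with h | h | h <;> subst h
          · exact fun e => n0 (i0.mp e)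
          · exact fun e => n1 (i1.mp e)
          · exact fun e => n2 (i2.mp e)
      have hu1 : u ≠ 1 := fun e => hy' 0 (hone (y.1 0) (x.1 0) e).symm
      have hv1 : vv ≠ 1 := fun e => hy' 1 (hone (y.1 1) (x.1 1) e).symm
      have hp1 : p ≠ 1 := fun e => hz' 0 (hone (z.1 0) (x.1 0) e).symm
      have hq1 : q ≠ 1 := fun e => hz' 1 (hone (z.1 1) (x.1 1) e).symm
      have iuv : (u = vv) ↔ (x.1 2 = y.1 2) :=
        conv u vv _ _ (by
          rw [hu_def, hvv_def, ← x.2, ← y.2]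
          simp [mul_comm, mul_left_comm, mul_assoc, hcan])
      have ipq : (p = q) ↔ (x.1 2 = z.1 2) :=
        conv p q _ _ (by
          rw [hp_def, hq_def, ← x.2, ← z.2]
          simp [mul_comm, mul_left_comm, mul_assoc, hcan])
      have huv1 : u ≠ vv := fun e => hy' 2 (iuv.mp e)
      have hpq1 : p ≠ q := fun e => hz' 2 (ipq.mp e)
      simp only [e1, e2, e3, e4, e5, e6, cT]
      exact keylem h2 hsq hcard u vv p q hu1 hv1 hp1 hq1 huv1 hpq1
    · rw [if_neg hz]; ring
  · rw [if_neg hy]; ring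
end

section
/- Assume G is a Klein four group (elementary abelian 2-group of order 4). Then the following matrix identities hold: (i) E_4*A_1E_3*A_2E_4* + E_4*A_1E_2*A_3E_4* = E_4*A_2E_4* + E_4*A_3E_4* + E_4*A_4E_4*; (ii) E_4*A_2E_1*A_3E_4* + E_4*A_1E_2*A_3E_4* = E_4*A_1E_4* + E_4*A_2E_4* + E_4*A_4E_4*; (iii) E_4*A_2E_3*A_1E_4* − E_4*A_1E_2*A_3E_4* = E_4*A_3E_4* − E_4*A_2E_4*; (iv) E_4*A_3E_1*A_2E_4* − E_4*A_1E_2*A_3E_4* = E_4*A_1E_4* − E_4*A_2E_4*; (v) E_4*A_3E_2*A_1E_4* + E_4*A_1E_2*A_3E_4* = 2̄·E_4*A_2E_4* + E_4*A_4E_4*, where 2̄ denotes the image of the integer 2 in F. -/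
open Matrix

section Generic
variable (F : Type) [Field F] {G : Type} [Group G] [Fintype G] [DecidableEq G]

lemma dualE_mul (x : XG G) (i : Fin 5) (M : Matrix (XG G) (XG G) F) (y z : XG G) :
    (DualE F x i * M) y z = if rel i x y then M y z else 0 := by
  rw [Matrix.mul_apply]
  have h : ∀ t : XG G, (DualE F x i) y t * M t z
      = if y = t then (if rel i x y then M t z else 0) else 0 := by
    intro t
    by_cases h1 : y = t <;> by_cases h2 : rel i x y <;> simp [DualE, h1, h2]
  simp only [h]
  rw [Finset.sum_ite_eq Finset.univ y (fun t => if rel i x y then M t z else 0)]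
  simp

lemma mul_dualE (x : XG G) (j : Fin 5) (M : Matrix (XG G) (XG G) F) (y z : XG G) :
    (M * DualE F x j) y z = if rel j x z then M y z else 0 := by
  rw [Matrix.mul_apply]
  have h : ∀ t : XG G, M y t * (DualE F x j) t z
      = if t = z then (if rel j x z then M y t else 0) else 0 := by
    intro t
    by_cases h1 : t = z <;> by_cases h2 : rel j x z <;> simp [DualE, h1, h2] <;> subst h1 <;>
      simp [h2]
  simp only [h]
  rw [Finset.sum_ite_eq' Finset.univ z (fun t => if rel j x z then M y t else 0)]
  simp

def cnt {G : Type} [Group G] [Fintype G] [DecidableEq G] (b c d : Fin 5) (x y z : XG G) : ℕ :=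
  (Finset.univ.filter (fun w : XG G => rel b y w ∧ rel c x w ∧ rel d w z)).card

lemma tripleEntry (x : XG G) (b c d : Fin 5) (y z : XG G) :
    ((Adj F b * DualE F x c * Adj F d : Matrix (XG G) (XG G) F)) y z = (cnt b c d x y z : F) := by
  rw [Matrix.mul_apply]
  have h : ∀ w : XG G, ((Adj F b * DualE F x c : Matrix (XG G) (XG G) F)) y w * (Adj F d : Matrix (XG G) (XG G) F) w z
      = if rel b y w ∧ rel c x w ∧ rel d w z then 1 else 0 := by
    intro w
    rw [mul_dualE]
    by_cases h1 : rel b y w <;> by_cases h2 : rel c x w <;> by_cases h3 : rel d w z <;>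
      simp [Adj, h1, h2, h3]
  simp only [h]
  rw [Finset.sum_boole]
  rfl

lemma quintEntry (x : XG G) (b c d : Fin 5) (y z : XG G) :
    ((DualE F x 4 * Adj F b * DualE F x c * Adj F d * DualE F x 4 : Matrix (XG G) (XG G) F)) y z
      = if rel 4 x y ∧ rel 4 x z then (cnt b c d x y z : F) else 0 := by
  have e1 : DualE F x 4 * Adj F b * DualE F x c * Adj F d * DualE F x 4
      = DualE F x 4 * (Adj F b * DualE F x c * Adj F d) * DualE F x 4 := by
    noncomm_ring
  rw [e1, mul_dualE, dualE_mul]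
  rw [tripleEntry]
  by_cases h1 : rel 4 x y <;> by_cases h2 : rel 4 x z <;> simp [h1, h2]

lemma singleEntry (x : XG G) (b : Fin 5) (y z : XG G) :
    ((DualE F x 4 * Adj F b * DualE F x 4 : Matrix (XG G) (XG G) F)) y z
      = if rel 4 x y ∧ rel 4 x z then (if rel b y z then (1:F) else 0) else 0 := by
  rw [mul_dualE, dualE_mul]
  by_cases h1 : rel 4 x y <;> by_cases h2 : rel 4 x z <;> simp [Adj, h1, h2]

end Generic

abbrev K4 : Type := Multiplicative (ZMod 2 × ZMod 2)

set_option synthInstance.maxSize 4000 in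
set_option maxHeartbeats 4000000 in
lemma keyCnt : ∀ x y z : XG K4, rel 4 x y → rel 4 x z →
    (cnt 1 3 2 x y z + cnt 1 2 3 x y z =
      (if rel 2 y z then 1 else 0) + (if rel 3 y z then 1 else 0) +
        (if rel 4 y z then 1 else 0)) ∧
    (cnt 2 1 3 x y z + cnt 1 2 3 x y z =
      (if rel 1 y z then 1 else 0) + (if rel 2 y z then 1 else 0) +
        (if rel 4 y z then 1 else 0)) ∧
    (cnt 2 3 1 x y z + (if rel 2 y z then 1 else 0) =
      cnt 1 2 3 x y z + (if rel 3 y z then 1 else 0)) ∧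
    (cnt 3 1 2 x y z + (if rel 2 y z then 1 else 0) =
      cnt 1 2 3 x y z + (if rel 1 y z then 1 else 0)) ∧
    (cnt 3 2 1 x y z + cnt 1 2 3 x y z =
      2 * (if rel 2 y z then 1 else 0) + (if rel 4 y z then 1 else 0)) := by
  decide

lemma iteCast (F : Type) [Field F] (p : Prop) [Decidable p] :
    ((if p then 1 else 0 : ℕ) : F) = if p then 1 else 0 := by split <;> simp

lemma stmtK (F : Type) [Field F] (x : XG K4) :
    (DualE F x 4 * Adj F 1 * DualE F x 3 * Adj F 2 * DualE F x 4 +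
       DualE F x 4 * Adj F 1 * DualE F x 2 * Adj F 3 * DualE F x 4 =
      DualE F x 4 * Adj F 2 * DualE F x 4 + DualE F x 4 * Adj F 3 * DualE F x 4 +
        DualE F x 4 * Adj F 4 * DualE F x 4) ∧
    (DualE F x 4 * Adj F 2 * DualE F x 1 * Adj F 3 * DualE F x 4 +
       DualE F x 4 * Adj F 1 * DualE F x 2 * Adj F 3 * DualE F x 4 =
      DualE F x 4 * Adj F 1 * DualE F x 4 + DualE F x 4 * Adj F 2 * DualE F x 4 +
        DualE F x 4 * Adj F 4 * DualE F x 4) ∧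
    (DualE F x 4 * Adj F 2 * DualE F x 3 * Adj F 1 * DualE F x 4 -
       DualE F x 4 * Adj F 1 * DualE F x 2 * Adj F 3 * DualE F x 4 =
      DualE F x 4 * Adj F 3 * DualE F x 4 - DualE F x 4 * Adj F 2 * DualE F x 4) ∧
    (DualE F x 4 * Adj F 3 * DualE F x 1 * Adj F 2 * DualE F x 4 -
       DualE F x 4 * Adj F 1 * DualE F x 2 * Adj F 3 * DualE F x 4 =
      DualE F x 4 * Adj F 1 * DualE F x 4 - DualE F x 4 * Adj F 2 * DualE F x 4) ∧
    (DualE F x 4 * Adj F 3 * DualE F x 2 * Adj F 1 * DualE F x 4 +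
       DualE F x 4 * Adj F 1 * DualE F x 2 * Adj F 3 * DualE F x 4 =
      (2 : F) • (DualE F x 4 * Adj F 2 * DualE F x 4) +
        DualE F x 4 * Adj F 4 * DualE F x 4) := by
  refine ⟨?_, ?_, ?_, ?_, ?_⟩ <;> ext y z <;>
    simp only [Matrix.add_apply, Matrix.sub_apply, Matrix.smul_apply, quintEntry, singleEntry] <;>
    by_cases hC : rel 4 x y ∧ rel 4 x z
  case pos =>
    have h := (keyCnt x y z hC.1 hC.2).1
    simp only [if_pos hC]
    have h' := congrArg (Nat.cast : ℕ → F) h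
    push_cast at h'
    linear_combination h'
  case neg => simp [hC]
  case pos =>
    have h := (keyCnt x y z hC.1 hC.2).2.1
    simp only [if_pos hC]
    have h' := congrArg (Nat.cast : ℕ → F) h
    push_cast at h'
    linear_combination h'
  case neg => simp [hC]
  case pos =>
    have h := (keyCnt x y z hC.1 hC.2).2.2.1
    simp only [if_pos hC]
    have h' := congrArg (Nat.cast : ℕ → F) h
    push_cast at h'
    linear_combination h'
  case neg => simp [hC]
  case pos =>
    have h := (keyCnt x y z hC.1 hC.2).2.2.2.1
    simp only [if_pos hC]
    have h' := congrArg (Nat.cast : ℕ → F) h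
    push_cast at h'
    linear_combination h'
  case neg => simp [hC]
  case pos =>
    have h := (keyCnt x y z hC.1 hC.2).2.2.2.2
    simp only [if_pos hC]
    have h' := congrArg (Nat.cast : ℕ → F) h
    push_cast at h'
    simp only [smul_eq_mul]
    linear_combination h'
  case neg => simp [hC]

section Transport
variable {G : Type} [Group G] [Fintype G] [DecidableEq G]

def psi (e : G ≃* K4) : XG G ≃ XG K4 where
  toFun v := ⟨fun d => e (v.1 d), by simp only []; rw [← _root_.map_mul, v.2]⟩
  invFun v := ⟨fun d => e.symm (v.1 d), by simp only []; rw [← _root_.map_mul, v.2]⟩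
  left_inv v := Subtype.ext (funext fun d => e.symm_apply_apply _)
  right_inv v := Subtype.ext (funext fun d => e.apply_symm_apply _)

lemma psi_fst (e : G ≃* K4) (y : XG G) (d : Fin 3) : (psi e y).1 d = e (y.1 d) := rfl

lemma rel_psi (e : G ≃* K4) (i : Fin 5) (y z : XG G) :
    rel i (psi e y) (psi e z) ↔ rel i y z := by
  have h1 : ∀ (u v : G), e u = e v ↔ u = v :=
    fun u v => ⟨fun h => e.injective h, fun h => by rw [h]⟩
  unfold rel
  split_ifs
  · exact (psi e).apply_eq_iff_eq
  · simp only [ne_eq, psi_fst, h1]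
  · simp only [ne_eq, psi_fst, h1, Equiv.apply_eq_iff_eq]

lemma adj_psi (F : Type) [Field F] (e : G ≃* K4) (i : Fin 5) :
    Adj F (G := G) i = (Adj F (G := K4) i).submatrix (psi e) (psi e) := by
  ext y z
  simp [Adj, Matrix.submatrix_apply, rel_psi]

lemma dualE_psi (F : Type) [Field F] (e : G ≃* K4) (x : XG G) (i : Fin 5) :
    DualE F x i = (DualE F (psi e x) i).submatrix (psi e) (psi e) := by
  ext y z
  simp [DualE, Matrix.submatrix_apply, rel_psi, Equiv.apply_eq_iff_eq]

lemma submatrix_add' {F : Type} [Field F] {α β : Type} (A B : Matrix α α F) (e1 e2 : β → α) :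
    (A + B).submatrix e1 e2 = A.submatrix e1 e2 + B.submatrix e1 e2 := rfl

lemma submatrix_sub' {F : Type} [Field F] {α β : Type} (A B : Matrix α α F) (e1 e2 : β → α) :
    (A - B).submatrix e1 e2 = A.submatrix e1 e2 - B.submatrix e1 e2 := rfl

lemma submatrix_smul' {F : Type} [Field F] {α β : Type} (c : F) (A : Matrix α α F) (e1 e2 : β → α) :
    (c • A).submatrix e1 e2 = c • A.submatrix e1 e2 := rfl

end Transport

def gmap {G : Type} [Group G] (a b : G) : K4 → G :=
  fun u => a ^ (u.toAdd.1.val) * b ^ (u.toAdd.2.val)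

theorem stmt8 (F : Type) [Field F] (G : Type) [Group G] [Fintype G] [DecidableEq G]
    (helem : ∀ a : G, a ^ 2 = 1) (hcard : Fintype.card G = 4)
    (x : XG G) :
    (DualE F x 4 * Adj F 1 * DualE F x 3 * Adj F 2 * DualE F x 4 +
       DualE F x 4 * Adj F 1 * DualE F x 2 * Adj F 3 * DualE F x 4 =
      DualE F x 4 * Adj F 2 * DualE F x 4 + DualE F x 4 * Adj F 3 * DualE F x 4 +
        DualE F x 4 * Adj F 4 * DualE F x 4) ∧
    (DualE F x 4 * Adj F 2 * DualE F x 1 * Adj F 3 * DualE F x 4 +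
       DualE F x 4 * Adj F 1 * DualE F x 2 * Adj F 3 * DualE F x 4 =
      DualE F x 4 * Adj F 1 * DualE F x 4 + DualE F x 4 * Adj F 2 * DualE F x 4 +
        DualE F x 4 * Adj F 4 * DualE F x 4) ∧
    (DualE F x 4 * Adj F 2 * DualE F x 3 * Adj F 1 * DualE F x 4 -
       DualE F x 4 * Adj F 1 * DualE F x 2 * Adj F 3 * DualE F x 4 =
      DualE F x 4 * Adj F 3 * DualE F x 4 - DualE F x 4 * Adj F 2 * DualE F x 4) ∧
    (DualE F x 4 * Adj F 3 * DualE F x 1 * Adj F 2 * DualE F x 4 -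
       DualE F x 4 * Adj F 1 * DualE F x 2 * Adj F 3 * DualE F x 4 =
      DualE F x 4 * Adj F 1 * DualE F x 4 - DualE F x 4 * Adj F 2 * DualE F x 4) ∧
    (DualE F x 4 * Adj F 3 * DualE F x 2 * Adj F 1 * DualE F x 4 +
       DualE F x 4 * Adj F 1 * DualE F x 2 * Adj F 3 * DualE F x 4 =
      (2 : F) • (DualE F x 4 * Adj F 2 * DualE F x 4) +
        DualE F x 4 * Adj F 4 * DualE F x 4) := by
  -- basic group facts
  have sq : ∀ a : G, a * a = 1 := fun a => by
    have h := helem a; rwa [pow_two] at h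
  have inva : ∀ t : G, t⁻¹ = t := fun t => inv_eq_of_mul_eq_one_right (sq t)
  have comm : ∀ a b : G, a * b = b * a := by
    intro a b
    calc a * b = (a * b)⁻¹ := (inv_eq_of_mul_eq_one_right (sq (a*b))).symm
    _ = b⁻¹ * a⁻¹ := mul_inv_rev a b
    _ = b * a := by rw [inva, inva]
  -- find generators
  have hc1 : 1 < Fintype.card G := by rw [hcard]; norm_num
  obtain ⟨a, ha⟩ := Fintype.exists_ne_of_one_lt_card hc1 1
  have hlt : ({1, a} : Finset G).card < (Finset.univ : Finset G).card := by
    have h2 : ({1, a} : Finset G).card ≤ 2 := by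
      apply le_trans (Finset.card_insert_le 1 {a})
      simp
    rw [Finset.card_univ, hcard]
    omega
  have hss : ({1, a} : Finset G) ⊂ Finset.univ := Finset.ssubset_univ_iff.2 (by
    intro h
    rw [h] at hlt
    exact lt_irrefl _ hlt)
  obtain ⟨b, _, hb⟩ := Finset.exists_of_ssubset hss
  simp only [Finset.mem_insert, Finset.mem_singleton, not_or] at hb
  obtain ⟨hb1, hba⟩ := hb
  have hab1 : a * b ≠ 1 := by
    intro h
    exact hba (by rw [← inva a, inv_eq_of_mul_eq_one_right h])
  have haab : a * b ≠ a := by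
    intro h
    exact hb1 (mul_left_cancel (a := a) (by rw [h, mul_one]))
  have hbab : a * b ≠ b := by
    intro h
    exact ha (mul_right_cancel (b := b) (by rw [h, one_mul]))
  -- the explicit bijection
  have cases2 : ∀ i : ZMod 2, i = 0 ∨ i = 1 := by decide
  have hval11 : ((1 : ZMod 2) + 1) = 0 := by decide
  have hv0 : (0 : ZMod 2).val = 0 := rfl
  have hv1 : (1 : ZMod 2).val = 1 := rfl
  have gpow : ∀ (t : G), t * t = 1 → ∀ i j : ZMod 2,
      t ^ (i + j).val = t ^ i.val * t ^ j.val := by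
    intro t ht i j
    rcases cases2 i with rfl | rfl <;> rcases cases2 j with rfl | rfl <;>
      simp [hval11, hv0, hv1, pow_succ, pow_zero, pow_one, ht]
  have hgmul : ∀ u v : K4, gmap a b (u * v) = gmap a b u * gmap a b v := by
    intro u v
    have rearr : ∀ p q r s : G, (p * q) * (r * s) = (p * r) * (q * s) := by
      intro p q r s
      calc (p*q)*(r*s) = p*(q*(r*s)) := by rw [mul_assoc]
      _ = p*((q*r)*s) := by rw [mul_assoc]
      _ = p*((r*q)*s) := by rw [comm q r]
      _ = p*(r*(q*s)) := by rw [mul_assoc]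
      _ = (p*r)*(q*s) := by rw [mul_assoc]
    show a ^ ((u.toAdd + v.toAdd).1).val * b ^ ((u.toAdd + v.toAdd).2).val = _
    rw [Prod.fst_add, Prod.snd_add, gpow a (sq a), gpow b (sq b)]
    exact rearr _ _ _ _
  have hginj : Function.Injective (gmap a b) := by
    have cases4 : ∀ u : K4, u.toAdd = (0,0) ∨ u.toAdd = (0,1) ∨
        u.toAdd = (1,0) ∨ u.toAdd = (1,1) := by decide
    intro u v huv
    apply Multiplicative.toAdd.injective
    have hu := cases4 u
    have hv := cases4 v
    unfold gmap at huv
    rcases hu with h | h | h | h <;> rcases hv with h' | h' | h' | h' <;>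
      rw [h, h'] <;> rw [h, h'] at huv <;>
      simp only [hv0, hv1, pow_zero, pow_one, one_mul, mul_one] at huv <;>
      first
        | rfl
        | (exact absurd huv.symm ha)
        | (exact absurd huv ha)
        | (exact absurd huv.symm hb1)
        | (exact absurd huv hb1)
        | (exact absurd huv.symm hba)
        | (exact absurd huv hba)
        | (exact absurd huv.symm hab1)
        | (exact absurd huv hab1)
        | (exact absurd huv.symm haab)
        | (exact absurd huv haab)
        | (exact absurd huv.symm hbab)
        | (exact absurd huv hbab)
  have hK4card : Fintype.card K4 = 4 := by decide
  have hgbij : Function.Bijective (gmap a b) :=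
    (Fintype.bijective_iff_injective_and_card (gmap a b)).2 ⟨hginj, by rw [hK4card, hcard]⟩
  let e0 : K4 ≃* G := MulEquiv.mk' (Equiv.ofBijective (gmap a b) hgbij) hgmul
  let e : G ≃* K4 := e0.symm
  have key := stmtK F (psi e x)
  refine ⟨?_, ?_, ?_, ?_, ?_⟩ <;>
    simp only [adj_psi F e, dualE_psi F e, Matrix.submatrix_mul_equiv,
      ← submatrix_add', ← submatrix_sub', ← submatrix_smul']
  · exact congrArg (fun M => M.submatrix (psi e) (psi e)) key.1
  · exact congrArg (fun M => M.submatrix (psi e) (psi e)) key.2.1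
  · exact congrArg (fun M => M.submatrix (psi e) (psi e)) key.2.2.1
  · exact congrArg (fun M => M.submatrix (psi e) (psi e)) key.2.2.2.1
  · exact congrArg (fun M => M.submatrix (psi e) (psi e)) key.2.2.2.2
end
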